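/- arXiv:2010.03100 — 9 statements merged into one kernel-verified Lean document; each statement's English description precedes it below -/
import Mathlib

section
/- Let m ≥ 1 and let r : Fin m → ℕ with r t ≥ 1 for all t. Let A = ∏_{t : Fin m} ℤ/(r t)ℤ, a finite abelian group. For b ∈ A define the character χ_b : A → ℂ by χ_b(a) = exp(2πi ∑_{t} (a t)·(b t)/(r t)) (lifting the coordinates a t, b t ∈ ℤ/(r t)ℤ to their integer representatives). Let ρ be the representation of A on ℂ^{m+1} = (Fin (m+1) → ℂ) in which ρ(a) multiplies the k-th coordinate by exp(2πi (a k)/(r k)) for each k : Fin m, and multiplies the last coordinate by exp(−2πi ∑_{t} (a t)/(r t)). For t : Fin m let e_t ∈ A be the element whose t-th coordinate is 1 and whose other coordinates are 0, and set e = ∑_{t} e_t. Then for every b ∈ A, the complex dimension of the simultaneous eigenspace {v ∈ ℂ^{m+1} | ρ(a) v = χ_b(a) · v for all a ∈ A} equals (the number of t : Fin m with e_t = b) + (1 if b = −e, and 0 otherwise). (Equivalently: in the McKay quiver of the abelian group G(r₁,…,r_m) embedded diagonally into SL(m+1, ℂ), the arrows out of a vertex i are exactly one arrow i → i + e_t for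 each t and one arrow i → i − e.) -/
/-!
`ρ` is diagonal, and `A` acts on the `k`-th coordinate line by the character `χ_{w k}`, where
`w = mckayWeight r` sends `t < m` to `e_t` and `m` to `-e`: writing `χ_b a = ∏ t, ζ_{r t} ^ (a t * b t)`
with `ζ_n = exp(2πi/n)` (the standard additive character of `ℤ/nℤ`), the last factor of `ρ(a)` is `∏ t, ζ_{r t} ^ (-a t)`.
The simultaneous `χ_b`-eigenspace of a family of diagonal operators is the coordinate subspace
spanned by the lines on which every operator acts by `χ_b`. Since `χ_b (e_s) = ζ_{r s} ^ (b s)`,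
the map `b ↦ χ_b` is injective, so that subspace has dimension `#{k | w k = b}`.
-/

open Module

/-- The character `χ_b` of the finite abelian group `A = ∏ t, ℤ/(r t)ℤ` attached to `b ∈ A`:
`χ_b a = exp(2πi ∑ t, (a t)(b t)/(r t))`, lifting coordinates to integer representatives. -/
noncomputable def abelChar {m : ℕ} (r : Fin m → ℕ) (b a : ∀ t, ZMod (r t)) : ℂ :=
  Complex.exp (2 * Real.pi * Complex.I *
    ∑ t, (((a t).val : ℂ) * ((b t).val : ℂ) / ((r t : ℕ) : ℂ)))

/-- The scalar by which `a ∈ A = ∏ t, ℤ/(r t)ℤ` acts on the `k`-th coordinate of `ℂ^{m+1}`: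
`exp(2πi (a k)/(r k))` for `k < m`, and `exp(-2πi ∑ t, (a t)/(r t))` on the last coordinate. -/
noncomputable def abelFactor {m : ℕ} (r : Fin m → ℕ) (a : ∀ t, ZMod (r t))
    (k : Fin (m + 1)) : ℂ :=
  if h : (k : ℕ) < m then
    Complex.exp (2 * Real.pi * Complex.I * ((a ⟨k, h⟩).val : ℂ) / ((r ⟨k, h⟩ : ℕ) : ℂ))
  else
    Complex.exp (-(2 * Real.pi * Complex.I * ∑ t, (((a t).val : ℂ) / ((r t : ℕ) : ℂ))))

/-- The action of `a ∈ A = ∏ t, ℤ/(r t)ℤ` on `ℂ^{m+1}`, multiplying each coordinate by the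
corresponding root of unity (the diagonal embedding of `A` into `SL(m+1, ℂ)`). -/
noncomputable def abelRho {m : ℕ} (r : Fin m → ℕ) (a : ∀ t, ZMod (r t)) :
    (Fin (m + 1) → ℂ) →ₗ[ℂ] (Fin (m + 1) → ℂ) :=
  LinearMap.pi fun k => abelFactor r a k • LinearMap.proj k

theorem Fin.card_filter_univ_castSucc {n : ℕ} (p : Fin (n + 1) → Prop) [DecidablePred p] :
    (Finset.univ.filter p).card =
      (Finset.univ.filter (p ∘ Fin.castSucc)).card + if p (Fin.last n) then 1 else 0 := by
  simp only [Finset.card_filter, Fin.sum_univ_castSucc, Function.comp_apply]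

section Diagonal

variable {ι A K : Type*} [Field K] (f : A → ι → K) (μ : A → K)

theorem iInf_eigenspace_pi_smul_proj :
    ⨅ a, Module.End.eigenspace
        (LinearMap.pi fun k => f a k • LinearMap.proj k : Module.End K (ι → K)) (μ a) =
      ⨅ k ∈ {k | ∃ a, f a k ≠ μ a}, LinearMap.ker (LinearMap.proj k : (ι → K) →ₗ[K] K) := by
  ext v
  simp only [Submodule.mem_iInf, Module.End.mem_eigenspace_iff, funext_iff, LinearMap.pi_apply,
    LinearMap.smul_apply, LinearMap.proj_apply, Pi.smul_apply, smul_eq_mul, Set.mem_ofPred_eq,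
    LinearMap.mem_ker]
  constructor
  · rintro h k ⟨a, ha⟩
    exact (mul_eq_mul_right_iff.mp (h a k)).resolve_left ha
  · intro h a k
    by_cases hk : f a k = μ a
    · rw [hk]
    · rw [h k ⟨a, hk⟩, mul_zero, mul_zero]

theorem finrank_iInf_eigenspace_pi_smul_proj [Fintype ι] :
    finrank K ↥(⨅ a, Module.End.eigenspace
        (LinearMap.pi fun k => f a k • LinearMap.proj k : Module.End K (ι → K)) (μ a)) =
      Nat.card {k // ∀ a, f a k = μ a} := by
  classical
  have hdisj : Disjoint {k | ∀ a, f a k = μ a} {k | ∃ a, f a k ≠ μ a} :=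
    Set.disjoint_left.mpr fun k hk ⟨a, ha⟩ => ha (hk a)
  have hcover : Set.univ ⊆ {k | ∀ a, f a k = μ a} ∪ {k | ∃ a, f a k ≠ μ a} :=
    fun k _ => (em (∀ a, f a k = μ a)).imp id not_forall.mp
  rw [iInf_eigenspace_pi_smul_proj, (LinearMap.iInfKerProjEquiv K (fun _ => K) hdisj
    hcover).finrank_eq, finrank_pi, Nat.card_eq_fintype_card]
  rfl

end Diagonal

section Characters

variable {m : ℕ} (r : Fin m → ℕ)

theorem abelChar_comm (b a : ∀ t, ZMod (r t)) : abelChar r b a = abelChar r a b := by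
  simp only [abelChar, mul_comm ((a _).val : ℂ)]

variable [∀ t, NeZero (r t)]

theorem abelChar_eq_prod (b a : ∀ t, ZMod (r t)) :
    abelChar r b a = ∏ t, ZMod.stdAddChar (a t * b t) := by
  rw [abelChar, Finset.mul_sum, Complex.exp_sum]
  refine Finset.prod_congr rfl fun t _ => ?_
  have hlift : a t * b t = ((((a t).val * (b t).val : ℕ) : ℤ) : ZMod (r t)) := by simp
  rw [hlift, ZMod.stdAddChar_coe]
  push_cast
  ring_nf

theorem abelChar_single (s : Fin m) (a : ∀ t, ZMod (r t)) :
    abelChar r (Pi.single s 1) a = ZMod.stdAddChar (a s) := by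
  rw [abelChar_eq_prod, Finset.prod_eq_single s]
  · rw [Pi.single_eq_same, mul_one]
  · intro t _ hts
    rw [Pi.single_eq_of_ne hts, mul_zero, AddChar.map_zero_eq_one]
  · exact fun hs => absurd (Finset.mem_univ s) hs

theorem abelChar_injective : Function.Injective (abelChar r) := by
  intro b b' h
  funext s
  apply ZMod.injective_stdAddChar
  rw [← abelChar_single, abelChar_comm, h, ← abelChar_comm, abelChar_single]

theorem abelFactor_castSucc (a : ∀ t, ZMod (r t)) (t : Fin m) :
    abelFactor r a (Fin.castSucc t) = ZMod.stdAddChar (a t) := by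
  rw [abelFactor, dif_pos (by simp), ZMod.stdAddChar_apply, ZMod.toCircle_apply]
  rfl

theorem abelFactor_last (a : ∀ t, ZMod (r t)) :
    abelFactor r a (Fin.last m) = ∏ t, ZMod.stdAddChar (-a t) := by
  rw [abelFactor, dif_neg (by simp), Finset.mul_sum, ← Finset.sum_neg_distrib,
    Complex.exp_sum]
  refine Finset.prod_congr rfl fun t _ => ?_
  rw [AddChar.map_neg_eq_inv, ZMod.stdAddChar_apply, ZMod.toCircle_apply, Complex.exp_neg]
  ring_nf

end Characters

def mckayWeight {m : ℕ} (r : Fin m → ℕ) : Fin (m + 1) → ∀ t, ZMod (r t) :=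
  Fin.lastCases (-∑ t, Pi.single t 1) fun t => Pi.single t 1

theorem mckayWeight_castSucc {m : ℕ} (r : Fin m → ℕ) (t : Fin m) :
    mckayWeight r (Fin.castSucc t) = Pi.single t 1 :=
  Fin.lastCases_castSucc t

theorem mckayWeight_last {m : ℕ} (r : Fin m → ℕ) :
    mckayWeight r (Fin.last m) = -∑ t, Pi.single t 1 :=
  Fin.lastCases_last

theorem abelFactor_eq_abelChar_mckayWeight {m : ℕ} (r : Fin m → ℕ) [∀ t, NeZero (r t)]
    (a : ∀ t, ZMod (r t)) (k : Fin (m + 1)) :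
    abelFactor r a k = abelChar r (mckayWeight r k) a := by
  induction k using Fin.lastCases with
  | last =>
    rw [mckayWeight_last, Finset.univ_sum_single (fun _ => 1), abelFactor_last,
      abelChar_eq_prod]
    simp only [Pi.neg_apply, mul_neg, mul_one]
  | cast t =>
    rw [mckayWeight_castSucc, abelFactor_castSucc, abelChar_single]

theorem abelRho_eq_pi_abelChar {m : ℕ} (r : Fin m → ℕ) [∀ t, NeZero (r t)] :
    abelRho r = fun a =>
      LinearMap.pi fun k => abelChar r (mckayWeight r k) a • LinearMap.proj k := by
  funext a
  simp only [abelRho, abelFactor_eq_abelChar_mckayWeight r a]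

theorem mckay_quiver_abelian_diag_sl_general
    {m : ℕ} (r : Fin m → ℕ) (hr : ∀ t, 1 ≤ r t)
    (b : ∀ t, ZMod (r t)) :
    finrank ℂ
        ↥(⨅ a : ∀ t, ZMod (r t), Module.End.eigenspace (abelRho r a) (abelChar r b a)) =
      (Finset.univ.filter fun t : Fin m =>
          (Pi.single t 1 : ∀ t, ZMod (r t)) = b).card +
        (if b = -(∑ t : Fin m, (Pi.single t 1 : ∀ t, ZMod (r t))) then 1 else 0) := by
  classical
  have : ∀ t, NeZero (r t) := fun t => NeZero.of_pos (hr t)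
  have hweight : ∀ k, (∀ a, abelChar r (mckayWeight r k) a = abelChar r b a) ↔
      mckayWeight r k = b :=
    fun k => funext_iff.symm.trans (abelChar_injective r).eq_iff
  rw [abelRho_eq_pi_abelChar, finrank_iInf_eigenspace_pi_smul_proj]
  simp_rw [hweight]
  rw [Nat.card_eq_fintype_card, Fintype.card_subtype, Fin.card_filter_univ_castSucc]
  simp only [Function.comp_apply, mckayWeight_castSucc, mckayWeight_last, eq_comm (a := b)]

/-- In the McKay quiver of the abelian group `G(r₁, …, r_m) = ∏ t, ℤ/(r t)ℤ` embedded
diagonally into `SL(m+1, ℂ)`, the arrows out of a vertex `i` are exactly one arrow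
`i → i + e_t` for each `t` and one arrow `i → i - e`: for every character `χ_b`, the
dimension of the simultaneous eigenspace `{v | ρ(a) v = χ_b(a) • v for all a}` equals the
number of `t` with `e_t = b`, plus `1` if `b = -e` and `0` otherwise. -/
theorem mckay_quiver_abelian_diag_sl
    {m : ℕ} (hm : 1 ≤ m) (r : Fin m → ℕ) (hr : ∀ t, 1 ≤ r t)
    (b : ∀ t, ZMod (r t)) :
    finrank ℂ
        ↥(⨅ a : ∀ t, ZMod (r t), Module.End.eigenspace (abelRho r a) (abelChar r b a)) =
      (Finset.univ.filter fun t : Fin m =>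
          (Pi.single t 1 : ∀ t, ZMod (r t)) = b).card +
        (if b = -(∑ t : Fin m, (Pi.single t 1 : ∀ t, ZMod (r t))) then 1 else 0) :=
  mckay_quiver_abelian_diag_sl_general r hr b
end

section
/- Let G be a finite subgroup of SL(2, ℂ) with |G| ≥ 2, let V be the natural two-dimensional representation of G, and let S be a simple finite-dimensional complex representation of G. Then dim_ℂ Hom_G(S, V ⊗ S) = 0. (Equivalently: the McKay quiver of G ⊂ SL(2,ℂ) has no loops.) -/
open CategoryTheory CategoryTheory.MonoidalCategory Module

/-- The natural two-dimensional complex representation of a subgroup `G` of `SL(2, ℂ)`,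
acting on `ℂ² = Fin 2 → ℂ` by matrix multiplication. -/
noncomputable def SL2.natRep (G : Subgroup (Matrix.SpecialLinearGroup (Fin 2) ℂ)) :
    Representation ℂ G (Fin 2 → ℂ) :=
  LinearEquiv.automorphismGroup.toLinearMapMonoidHom.comp
    (Matrix.SpecialLinearGroup.toLin'.comp G.subtype)

/-- The natural representation of `G ⊆ SL(2, ℂ)` as an object of `FDRep ℂ G`. -/
noncomputable def SL2.natV (G : Subgroup (Matrix.SpecialLinearGroup (Fin 2) ℂ)) :
    FDRep ℂ G :=
  FDRep.of (SL2.natRep G)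

section Auxiliary

open Matrix

abbrev SL2C := Matrix.SpecialLinearGroup (Fin 2) ℂ


lemma one_add_sq_zero_pow {R : Type*} [Ring R] {N : R} (hN : N * N = 0) (k : ℕ) :
    (1 + N) ^ k = 1 + k • N := by
  induction k with
  | zero => simp
  | succ k ih =>
    rw [pow_succ, ih, succ_nsmul, nsmul_eq_mul]
    have h : (k : R) * (N * N) = 0 := by rw [hN, mul_zero]
    noncomm_ring
    rw [h, add_zero]

/-- A finite-order `SL₂(ℂ)` matrix fixing a nonzero vector is the identity. -/
lemma sl2_fixed_eq_one {A : Matrix (Fin 2) (Fin 2) ℂ} (hdet : A.det = 1) {m : ℕ} (hm : m ≠ 0)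
    (hAm : A ^ m = 1) {p : Fin 2 → ℂ} (hp : p ≠ 0) (hfix : A *ᵥ p = p) : A = 1 := by
  have h1 : (A - 1) *ᵥ p = 0 := by
    rw [Matrix.sub_mulVec, hfix, Matrix.one_mulVec, sub_self]
  have hd0 : (A - 1).det = 0 := Matrix.exists_mulVec_eq_zero_iff.mp ⟨p, hp, h1⟩
  have hdet' := Matrix.det_fin_two A
  rw [hdet] at hdet'
  rw [Matrix.det_fin_two] at hd0
  simp only [Matrix.sub_apply, Matrix.one_apply, if_true, eq_self_iff_true] at hd0
  norm_num at hd0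
  have htr : A 1 1 = 2 - A 0 0 := by linear_combination -hd0 - hdet'
  have hsq : A * A + 1 = A + A := by
    ext i j
    rw [Matrix.add_apply, Matrix.add_apply, Matrix.mul_apply]
    fin_cases i <;> fin_cases j <;>
      simp [Fin.sum_univ_two, Matrix.one_apply] <;>
    first
      | linear_combination hdet' + A 0 0 * htr
      | linear_combination A 0 1 * htr
      | linear_combination A 1 0 * htr
      | linear_combination hdet' + A 1 1 * htr
  have hNN : (A - 1) * (A - 1) = 0 := by
    have expand : (A - 1) * (A - 1) = A * A + 1 - A - A := by noncomm_ring
    rw [expand, hsq]; abel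
  have hbin := one_add_sq_zero_pow hNN m
  rw [add_sub_cancel, hAm] at hbin
  have : A - 1 = 0 := by
    have hmN : (m : ℂ) • (A - 1) = 0 := by
      rw [Nat.cast_smul_eq_nsmul]
      exact (left_eq_add.mp hbin)
    rcases smul_eq_zero.mp hmN with h | h
    · exact absurd (Nat.cast_eq_zero.mp h) hm
    · exact h
  exact sub_eq_zero.mp this

variable {G : Type} [Group G]


/-- Nontriviality of the carrier of a simple `FDRep`. -/
lemma FDRep.nontrivial_of_simple (S : FDRep ℂ G) [Simple S] : Nontrivial S := by
  by_contra h
  rw [not_nontrivial_iff_subsingleton] at h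
  apply CategoryTheory.id_nonzero S
  ext x
  exact h.elim _ _

/-- Schur: an endomorphism commuting with a simple representation is scalar. -/
lemma FDRep.smul_id_of_comm (S : FDRep ℂ G) [Simple S] (T : S →ₗ[ℂ] S)
    (hT : ∀ g : G, T ∘ₗ S.ρ g = S.ρ g ∘ₗ T) : ∃ c : ℂ, T = c • LinearMap.id := by
  let f : S ⟶ S := ⟨FGModuleCat.ofHom T, fun g => by ext x; exact LinearMap.congr_fun (hT g) x⟩
  obtain ⟨c, hc⟩ := CategoryTheory.endomorphism_simple_eq_smul_id ℂ f
  refine ⟨c, ?_⟩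
  have := congrArg (fun φ : S ⟶ S => φ.hom.hom.hom) hc
  ext x
  exact (LinearMap.congr_fun this x).symm

/-- An invariant submodule of a simple `FDRep` is `⊥` or `⊤`. -/
lemma FDRep.invariant_bot_or_top (S : FDRep ℂ G) [Simple S] (p : Submodule ℂ S)
    (hp : ∀ g : G, ∀ x ∈ p, S.ρ g x ∈ p) : p = ⊥ ∨ p = ⊤ := by
  by_cases hbot : p = ⊥
  · exact Or.inl hbot
  right
  -- the subrepresentation on `p`
  let ρ' : Representation ℂ G p :=
    { toFun := fun g => (S.ρ g).restrict (fun x hx => hp g x hx)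
      map_one' := by ext x; simp
      map_mul' := fun g h => by ext x; simp [LinearMap.restrict_apply] }
  let Y : FDRep ℂ G := FDRep.of ρ'
  let ι : Y ⟶ S := ⟨FGModuleCat.ofHom p.subtype, fun g => rfl⟩
  have hinj : Function.Injective ι.hom := Subtype.val_injective
  haveI : Mono ι := by
    apply ConcreteCategory.mono_of_injective
    exact hinj
  have hne : ι ≠ 0 := by
    obtain ⟨x, hx, hx0⟩ := Submodule.exists_mem_ne_zero_of_ne_bot hbot
    intro h
    apply hx0
    have := congrArg Action.Hom.hom h
    have := LinearMap.congr_fun (congrArg (fun φ => φ.hom.hom) this) ⟨x, hx⟩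
    simp [ι] at this
    exact this
  haveI : IsIso ι := isIso_of_mono_of_nonzero hne
  rw [Submodule.eq_top_iff']
  intro x
  have h1 : (inv ι ≫ ι) = 𝟙 S := IsIso.inv_hom_id ι
  have h2 := congrArg Action.Hom.hom h1
  have h3 := LinearMap.congr_fun (congrArg (fun φ => φ.hom.hom) h2) x
  have : ι.hom ((inv ι).hom x) = x := h3
  rw [← this]
  exact ((inv ι).hom x).2

lemma comm_aux {R : Type*} [Ring R] [Algebra ℂ R] (f g r : R) (a b c d : ℂ)
    (h1 : f * r = r * (a • f + b • g)) (h2 : g * r = r * (c • f + d • g))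
    (hdet : a * d - b * c = 1) :
    (f * g - g * f) * r = r * (f * g - g * f) := by
  have e1 : f * g * r = r * ((a • f + b • g) * (c • f + d • g)) := by
    rw [mul_assoc, h2, ← mul_assoc, h1, mul_assoc]
  have e2 : g * f * r = r * ((c • f + d • g) * (a • f + b • g)) := by
    rw [mul_assoc, h1, ← mul_assoc, h2, mul_assoc]
  have key : (a • f + b • g) * (c • f + d • g) - (c • f + d • g) * (a • f + b • g)
      = f * g - g * f := by
    simp only [add_mul, mul_add, smul_mul_assoc, mul_smul_comm, smul_smul]
    match_scalars <;> first | ring1 | linear_combination hdet | linear_combination -hdet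
  rw [sub_mul, e1, e2, ← mul_sub, key, mul_sub]

lemma mckay_core (G : Subgroup SL2C) [Finite G] (hG : 2 ≤ Nat.card G)
    (S : FDRep ℂ G) [Simple S] (F : Fin 2 → (S →ₗ[ℂ] S))
    (hF : ∀ (g : G) (i : Fin 2),
      F i ∘ₗ S.ρ g = S.ρ g ∘ₗ ∑ j, ((g : SL2C) : Matrix (Fin 2) (Fin 2) ℂ) i j • F j) :
    ∀ i, F i = 0 := by
  haveI : Fintype G := Fintype.ofFinite G
  haveI : Nontrivial S := FDRep.nontrivial_of_simple S
  set A : G → Matrix (Fin 2) (Fin 2) ℂ :=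
    fun g => ((g : SL2C) : Matrix (Fin 2) (Fin 2) ℂ) with hA
  -- the relations in mul form
  have hFmul : ∀ (g : G) (i : Fin 2),
      F i * S.ρ g = S.ρ g * (A g i 0 • F 0 + A g i 1 • F 1) := by
    intro g i
    have := hF g i
    rw [Fin.sum_univ_two] at this
    exact this
  have hdetA : ∀ g : G, (A g).det = 1 := fun g => (g : SL2C).2
  -- Step 1: F 0 and F 1 commute
  have hcomm : F 0 ∘ₗ F 1 = F 1 ∘ₗ F 0 := by
    have hC : ∀ g : G, (F 0 * F 1 - F 1 * F 0) * S.ρ g = S.ρ g * (F 0 * F 1 - F 1 * F 0) := by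
      intro g
      refine comm_aux (F 0) (F 1) (S.ρ g) (A g 0 0) (A g 0 1) (A g 1 0) (A g 1 1)
        (hFmul g 0) (hFmul g 1) ?_
      have := hdetA g
      rw [Matrix.det_fin_two] at this
      exact this
    obtain ⟨c, hc⟩ := FDRep.smul_id_of_comm S (F 0 * F 1 - F 1 * F 0)
      (fun g => by
        have := hC g
        simpa [Module.End.mul_eq_comp] using this)
    have htr : LinearMap.trace ℂ S (F 0 * F 1 - F 1 * F 0) = 0 := by
      rw [map_sub]
      rw [Module.End.mul_eq_comp, Module.End.mul_eq_comp, LinearMap.trace_comp_comm']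
      ring
    rw [hc] at htr
    rw [_root_.map_smul, LinearMap.trace_id] at htr
    have hc0 : c = 0 := by
      have hrank : ((finrank ℂ S : ℂ)) ≠ 0 := by
        have h := finrank_pos (R := ℂ) (M := S)
        exact_mod_cast Nat.pos_iff_ne_zero.mp h
      simp only [smul_eq_mul] at htr
      rcases mul_eq_zero.mp htr with h | h
      · exact h
      · exact absurd h hrank
    have : F 0 * F 1 - F 1 * F 0 = 0 := by rw [hc, hc0, zero_smul]
    have := sub_eq_zero.mp this
    simpa [Module.End.mul_eq_comp] using this
  -- Step 2: common eigenvector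
  obtain ⟨μ, hμ⟩ := Module.End.exists_eigenvalue (F 0)
  have hinvE : ∀ x ∈ Module.End.eigenspace (F 0) μ, F 1 x ∈ Module.End.eigenspace (F 0) μ := by
    intro x hx
    rw [Module.End.mem_eigenspace_iff] at hx ⊢
    have h' : F 0 (F 1 x) = F 1 (F 0 x) := LinearMap.congr_fun hcomm x
    rw [h', hx]
    exact (F 1).map_smul μ x
  haveI : Nontrivial (Module.End.eigenspace (F 0) μ) :=
    Submodule.nontrivial_iff_ne_bot.mpr hμ
  obtain ⟨ν, hν⟩ := Module.End.exists_eigenvalue ((F 1).restrict hinvE)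
  obtain ⟨w, hw⟩ := hν.exists_hasEigenvector
  set v : S := (w : S) with hv
  have hv0 : v ≠ 0 := fun h => hw.2 (Subtype.ext h)
  have hvp : ∀ i : Fin 2, F i v = (![μ, ν] : Fin 2 → ℂ) i • v := by
    intro i
    fin_cases i
    · simpa using Module.End.mem_eigenspace_iff.mp w.2
    · have := Module.End.mem_eigenspace_iff.mp hw.1
      have := congrArg Subtype.val this
      simpa [LinearMap.restrict_apply] using this
  set p : Fin 2 → ℂ := ![μ, ν] with hp
  -- universal eigendata propagation
  have heig : ∀ (x : S) (q : Fin 2 → ℂ), (∀ i, F i x = q i • x) →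
      ∀ (g : G) (i : Fin 2), F i (S.ρ g x) = ((A g) *ᵥ q) i • S.ρ g x := by
    intro x q hx g i
    have h1 : F i (S.ρ g x) = S.ρ g ((A g i 0 • F 0 + A g i 1 • F 1) x) := by
      have := LinearMap.congr_fun (hFmul g i) x
      simpa [Module.End.mul_eq_comp] using this
    rw [h1]
    have h2 : (A g i 0 • F 0 + A g i 1 • F 1) x = ((A g) *ᵥ q) i • x := by
      simp only [LinearMap.add_apply, LinearMap.smul_apply, hx 0, hx 1, smul_smul]
      rw [← add_smul, Matrix.mulVec, dotProduct, Fin.sum_univ_two]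
    rw [h2]
    exact (S.ρ g).map_smul _ _
  by_cases hp0 : p = 0
  · -- joint kernel is invariant and nonzero, hence everything, so F = 0
    intro i
    have hK : ∀ g : G, ∀ x ∈ LinearMap.ker (F 0) ⊓ LinearMap.ker (F 1),
        S.ρ g x ∈ LinearMap.ker (F 0) ⊓ LinearMap.ker (F 1) := by
      intro g x hx
      rw [Submodule.mem_inf, LinearMap.mem_ker, LinearMap.mem_ker] at hx
      obtain ⟨h0, h1⟩ := hx
      have hq : ∀ j : Fin 2, F j x = (0 : Fin 2 → ℂ) j • x := by
        intro j; fin_cases j <;> simp [h0, h1]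
      rw [Submodule.mem_inf, LinearMap.mem_ker, LinearMap.mem_ker]
      constructor
      · rw [heig x 0 hq g 0]; simp [Matrix.mulVec_zero]
      · rw [heig x 0 hq g 1]; simp [Matrix.mulVec_zero]
    rcases FDRep.invariant_bot_or_top S _ hK with hbot | htop
    · exfalso
      apply hv0
      have hv_mem : v ∈ LinearMap.ker (F 0) ⊓ LinearMap.ker (F 1) := by
        rw [Submodule.mem_inf, LinearMap.mem_ker, LinearMap.mem_ker]
        constructor
        · rw [hvp 0, hp0]; simp
        · rw [hvp 1, hp0]; simp
      rw [hbot] at hv_mem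
      simpa using hv_mem
    · ext x
      have hx : x ∈ LinearMap.ker (F 0) ⊓ LinearMap.ker (F 1) := htop ▸ Submodule.mem_top
      rw [Submodule.mem_inf, LinearMap.mem_ker, LinearMap.mem_ker] at hx
      obtain ⟨h0, h1⟩ := hx
      fin_cases i <;> simp [h0, h1]
  · exfalso
    set n : ℕ := Nat.card G with hn
    have hn0 : n ≠ 0 := by omega
    have hord : ∀ g : G, (A g) ^ n = 1 := by
      intro g
      have h1 : g ^ n = 1 := by
        haveI : Fintype G := Fintype.ofFinite G
        rw [hn, Nat.card_eq_fintype_card]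
        exact pow_card_eq_one
      have h2 : ((g ^ n : G) : SL2C) = (g : SL2C) ^ n := SubgroupClass.coe_pow _ _
      have h3 : (A g) ^ n = A (g ^ n) := by
        rw [hA]
        simp only
        rw [h2]
        exact (Matrix.SpecialLinearGroup.coe_pow _ _).symm
      rw [h3, h1, hA]
      simp
    have hAmul : ∀ a b : G, A (a * b) = A a * A b := fun a b => rfl
    have hA1 : A 1 = 1 := rfl
    have hone : ∀ g : G, A g = 1 → g = 1 := by
      intro g hg
      have : (g : SL2C) = 1 := Subtype.ext hg
      exact_mod_cast Subtype.ext this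
    set P : G → Fin 2 → ℂ := fun g => (A g) *ᵥ p with hP
    have hPinj : Function.Injective P := by
      intro g h hgh
      have key : A (h⁻¹ * g) *ᵥ p = p := by
        rw [hAmul, ← Matrix.mulVec_mulVec]
        have hPh : A g *ᵥ p = A h *ᵥ p := hgh
        rw [hPh, Matrix.mulVec_mulVec, ← hAmul, inv_mul_cancel, hA1, Matrix.one_mulVec]
      have := hone _ (sl2_fixed_eq_one (hdetA _) hn0 (hord _) hp0 key)
      have := inv_mul_eq_one.mp this
      exact this.symm
    haveI : Infinite ℂ := inferInstance
    let bad : Finset ℂ :=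
      Finset.image (fun gh : G × G => (P gh.1 0 - P gh.2 0) / (P gh.2 1 - P gh.1 1)) Finset.univ
    obtain ⟨t, ht⟩ := Infinite.exists_notMem_finset bad
    have hcinj : Function.Injective (fun g : G => P g 0 + t * P g 1) := by
      intro g h hgh
      simp only at hgh
      by_cases h11 : P h 1 = P g 1
      · apply hPinj
        funext i
        fin_cases i
        · show P g 0 = P h 0
          rw [h11] at hgh
          linear_combination hgh
        · exact h11.symm
      · exfalso
        apply ht
        have hne : P h 1 - P g 1 ≠ 0 := sub_ne_zero.mpr h11
        have : t = (P g 0 - P h 0) / (P h 1 - P g 1) := by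
          rw [eq_div_iff hne]
          first
            | linear_combination -hgh
            | linear_combination hgh
            | linear_combination -2*hgh
            | linear_combination 2*hgh
        rw [this]
        exact Finset.mem_image.mpr ⟨(g, h), Finset.mem_univ _, rfl⟩
    have hvg : ∀ g : G, Module.End.HasEigenvector (F 0 + t • F 1)
        (P g 0 + t * P g 1) (S.ρ g v) := by
      intro g
      constructor
      · rw [Module.End.mem_eigenspace_iff]
        have e0 := heig v p hvp g 0
        have e1 := heig v p hvp g 1
        have : (F 0 + t • F 1) (S.ρ g v) = F 0 (S.ρ g v) + t • F 1 (S.ρ g v) := rfl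
        rw [this, e0, e1, smul_smul, ← add_smul]
      · intro h
        apply hv0
        have hback : S.ρ g⁻¹ (S.ρ g v) = v := by
          rw [← Module.End.mul_apply, ← _root_.map_mul, inv_mul_cancel, _root_.map_one,
            Module.End.one_apply]
        rw [h, map_zero] at hback
        exact hback.symm
    have li := Module.End.eigenvectors_linearIndependent' (F 0 + t • F 1)
      (fun g : G => P g 0 + t * P g 1) hcinj (fun g => S.ρ g v) hvg
    set u : S.V := ∑ g : G, S.ρ g v with hu
    have hu0 : u ≠ 0 := by
      intro h
      have h' : ∑ g : G, (1 : ℂ) • S.ρ g v = 0 := by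
        simpa using h
      have := Fintype.linearIndependent_iff.mp li (fun _ => (1 : ℂ)) h' 1
      exact one_ne_zero this
    have huinv : ∀ h : G, S.ρ h u = u := by
      intro h
      rw [hu, map_sum]
      have hmul : ∀ g : G, S.ρ h (S.ρ g v) = S.ρ (h * g) v := by
        intro g; rw [← Module.End.mul_apply, ← _root_.map_mul]
      calc ∑ g : G, S.ρ h (S.ρ g v) = ∑ g : G, S.ρ (h * g) v := by
            exact Finset.sum_congr rfl fun g _ => hmul g
        _ = ∑ g : G, S.ρ g v := Fintype.sum_equiv (Equiv.mulLeft h)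
              (fun g => S.ρ (h * g) v) (fun g => S.ρ g v) (fun g => rfl)
    -- the span of u is an invariant line, hence everything
    have hspan : Submodule.span ℂ ({u} : Set S) = ⊥ ∨ Submodule.span ℂ ({u} : Set S) = ⊤ := by
      apply FDRep.invariant_bot_or_top
      intro g x hx
      rw [Submodule.mem_span_singleton] at hx ⊢
      obtain ⟨z, rfl⟩ := hx
      exact ⟨z, by rw [_root_.map_smul, huinv g]⟩
    rcases hspan with hbot | htop
    · exfalso
      have hm : u ∈ Submodule.span ℂ ({u} : Set S) := Submodule.mem_span_singleton_self u
      rw [hbot, Submodule.mem_bot] at hm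
      exact hu0 hm
    -- v is a multiple of u, so u is a joint eigenvector with pair p
    have hvmem : v ∈ Submodule.span ℂ ({u} : Set S) := htop ▸ Submodule.mem_top
    obtain ⟨z, hz⟩ := Submodule.mem_span_singleton.mp hvmem
    have hz0 : z ≠ 0 := fun hzz => hv0 (by rw [← hz, hzz, zero_smul])
    have hueig : ∀ i, F i u = p i • u := by
      intro i
      have h1 : F i (z • u) = p i • (z • u) := by rw [hz]; exact hvp i
      rw [_root_.map_smul, smul_smul, mul_comm, ← smul_smul] at h1
      exact smul_right_injective _ hz0 h1
    -- so A g *ᵥ p = p for every g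
    have hfixall : ∀ g : G, A g *ᵥ p = p := by
      intro g
      funext i
      have h1 : F i u = (A g *ᵥ p) i • u := by
        conv_lhs => rw [← huinv g]
        rw [heig u p hueig g i, huinv g]
      have h2 := hueig i
      have h3 : ((A g *ᵥ p) i - p i) • u = 0 := by
        rw [sub_smul, ← h1, ← h2, sub_self]
      rcases smul_eq_zero.mp h3 with hcase | hcase
      · exact sub_eq_zero.mp hcase
      · exact absurd hcase hu0
    -- but a nontrivial element of G cannot fix the nonzero vector p
    haveI : Nontrivial G := by
      rw [← Finite.one_lt_card_iff_nontrivial]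
      omega
    obtain ⟨g0, hg0⟩ := exists_ne (1 : G)
    exact hg0 (hone g0 (sl2_fixed_eq_one (hdetA g0) hn0 (hord g0) hp0 (hfixall g0)))

end Auxiliary

section Main
open Matrix

/-- For a finite subgroup `G` of `SL(2, ℂ)` with `|G| ≥ 2`, the natural representation `V`,
and a simple finite-dimensional complex representation `S` of `G`,
`dim Hom_G(S, V ⊗ S) = 0`: the McKay quiver of `G ⊂ SL(2, ℂ)` has no loops. -/
theorem mckay_sl2_no_loops
    (G : Subgroup (Matrix.SpecialLinearGroup (Fin 2) ℂ)) [Finite G]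
    (hG : 2 ≤ Nat.card G)
    (S : FDRep ℂ G) [Simple S] :
    finrank ℂ (S ⟶ SL2.natV G ⊗ S) = 0 := by
  rw [finrank_zero_iff]
  constructor
  intro φ ψ
  suffices h : ∀ χ : S ⟶ SL2.natV G ⊗ S, χ = 0 by rw [h φ, h ψ]
  intro χ
  -- the two component maps
  let π : Fin 2 → (TensorProduct ℂ (Fin 2 → ℂ) S →ₗ[ℂ] S) := fun i =>
    TensorProduct.lift ((LinearMap.lsmul ℂ S).comp (LinearMap.proj i))
  have hπ : ∀ (i : Fin 2) (x : Fin 2 → ℂ) (s : S), π i (x ⊗ₜ s) = x i • s := by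
    intro i x s
    simp [π, TensorProduct.lift.tmul]
  let Φ : S →ₗ[ℂ] TensorProduct ℂ (Fin 2 → ℂ) S := χ.hom.hom.hom
  let F : Fin 2 → (S →ₗ[ℂ] S) := fun i => (π i).comp Φ
  -- the action on the tensor product
  have hten : ∀ (g : G) (y : TensorProduct ℂ (Fin 2 → ℂ) S),
      (SL2.natV G ⊗ S).ρ g y = TensorProduct.map (SL2.natRep G g) (S.ρ g) y := by
    intro g y
    rfl
  have hnat : ∀ (g : G) (x : Fin 2 → ℂ),
      SL2.natRep G g x = ((g : SL2C) : Matrix (Fin 2) (Fin 2) ℂ) *ᵥ x := by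
    intro g x
    rfl
  have hcommφ : ∀ (g : G) (s : S), Φ (S.ρ g s) = (SL2.natV G ⊗ S).ρ g (Φ s) := by
    intro g s
    exact LinearMap.congr_fun (congrArg (fun φ => φ.hom.hom) (χ.comm g)) s
  have hF : ∀ (g : G) (i : Fin 2),
      F i ∘ₗ S.ρ g = S.ρ g ∘ₗ ∑ j, ((g : SL2C) : Matrix (Fin 2) (Fin 2) ℂ) i j • F j := by
    intro g i
    have hkey : (π i).comp (TensorProduct.map (SL2.natRep G g) (S.ρ g))
        = (S.ρ g).comp (∑ j, ((g : SL2C) : Matrix (Fin 2) (Fin 2) ℂ) i j • π j) := by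
      apply TensorProduct.ext'
      intro x s
      have l1 : (π i) (TensorProduct.map (SL2.natRep G g) (S.ρ g) (x ⊗ₜ s))
          = (((g : SL2C) : Matrix (Fin 2) (Fin 2) ℂ) i 0 * x 0
            + ((g : SL2C) : Matrix (Fin 2) (Fin 2) ℂ) i 1 * x 1) • S.ρ g s := by
        rw [TensorProduct.map_tmul, hπ, hnat, Matrix.mulVec, dotProduct,
          Fin.sum_univ_two]
      have l2 : (∑ j, ((g : SL2C) : Matrix (Fin 2) (Fin 2) ℂ) i j • π j) (x ⊗ₜ s)
          = (((g : SL2C) : Matrix (Fin 2) (Fin 2) ℂ) i 0 * x 0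
            + ((g : SL2C) : Matrix (Fin 2) (Fin 2) ℂ) i 1 * x 1) • s := by
        rw [LinearMap.sum_apply, Fin.sum_univ_two]
        simp only [LinearMap.smul_apply, hπ, smul_smul]
        rw [← add_smul]
      rw [LinearMap.comp_apply, LinearMap.comp_apply, l1, l2, _root_.map_smul]
    ext s
    simp only [LinearMap.comp_apply, F]
    rw [hcommφ g s, hten g (Φ s)]
    have := LinearMap.congr_fun hkey (Φ s)
    simp only [LinearMap.comp_apply] at this
    rw [this]
    congr 1
  have hF0 := mckay_core G hG S F hF
  -- reconstruction: x = ∑ i, e i ⊗ π i x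
  have hrecon : ∀ x : TensorProduct ℂ (Fin 2 → ℂ) S,
      x = ∑ i : Fin 2, (Pi.single i 1 : Fin 2 → ℂ) ⊗ₜ π i x := by
    intro x
    induction x with
    | zero => simp
    | tmul x s =>
      rw [Fin.sum_univ_two]
      simp only [hπ]
      rw [TensorProduct.tmul_smul, TensorProduct.tmul_smul]
      rw [TensorProduct.smul_tmul', TensorProduct.smul_tmul']
      rw [← TensorProduct.add_tmul]
      congr 1
      funext j
      fin_cases j <;> simp [Pi.single_apply]
    | add y z hy hz =>
      conv_lhs => rw [hy, hz]
      rw [← Finset.sum_add_distrib]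
      congr 1
      funext i
      rw [map_add, TensorProduct.tmul_add]
  apply Action.hom_ext
  ext s
  show Φ s = 0
  rw [hrecon (Φ s)]
  have : ∀ i : Fin 2, π i (Φ s) = 0 := by
    intro i
    have := LinearMap.congr_fun (hF0 i) s
    simpa [F] using this
  simp [this]

end Main
end

section
/- Let G be a finite subgroup of SL(2, ℂ) with |G| ≥ 2, let V be the natural two-dimensional representation of G, and let S be a simple finite-dimensional complex representation of G. Then dim_ℂ Hom_G(S, (V ⊕ 𝟙) ⊗ S) = 1, where 𝟙 is the one-dimensional trivial representation. (Equivalently: in the McKay quiver of G embedded into SL(3, ℂ) via g ↦ diag(g, 1), there is exactly one loop at each vertex.) -/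
open CategoryTheory CategoryTheory.Limits CategoryTheory.MonoidalCategory Module

/-- The category `FDRep k G` has binary biproducts (direct sums), derived from its
binary products and preadditive structure. -/
instance FDRep.hasBinaryBiproducts (k G : Type) [Field k] [Monoid G] :
    HasBinaryBiproducts (FDRep k G) :=
  HasBinaryBiproducts.of_hasBinaryProducts

/-!
An equivariant map `T : S → V ⊗ S` is the same as a pair `f₀, f₁` of endomorphisms of `S` that
transform like the coordinates of `ℂ²`. Because `det g = 1`, the commutator `[f₀, f₁]` is
`G`-equivariant, hence a scalar by Schur's lemma, hence zero since its trace vanishes. So `f₀, f₁`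
have a common eigenvector `s`, with eigenvalue vector `v`. If `v = 0`, the joint kernel is a
nonzero subrepresentation, so `T = 0`. Otherwise `g • s` is a common eigenvector with eigenvalue
vector `g v`, and these are pairwise distinct because a nontrivial element of finite order of
`SL(2, ℂ)` fixes no nonzero vector. The vectors `g • s` are then linearly independent, so their
sum is a nonzero invariant vector; by irreducibility `G` acts trivially on `S`, contradicting the
distinctness. Hence `Hom_G(S, V ⊗ S) = 0`, while `Hom_G(S, 𝟙 ⊗ S)` is one-dimensional by Schur.
-/

theorem one_add_pow_of_sq_eq_zero {R : Type*} [Semiring R] {N : R} (hN : N ^ 2 = 0) (n : ℕ) :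
    (1 + N) ^ n = 1 + n • N := by
  induction n with
  | zero => simp
  | succ n ih =>
    rw [pow_succ, ih, add_mul, one_mul, mul_add, mul_one, smul_mul_assoc, ← sq, hN, smul_zero,
      succ_nsmul]
    abel

open scoped Matrix

theorem Matrix.sq_sub_one_eq_zero_of_det_eq_one {K : Type*} [CommRing K]
    {A : Matrix (Fin 2) (Fin 2) K} (hdet : A.det = 1) (hsing : (A - 1).det = 0) :
    (A - 1) ^ 2 = 0 := by
  rw [det_fin_two] at hdet hsing
  simp only [sub_apply, one_apply_eq, one_apply_ne zero_ne_one, one_apply_ne one_ne_zero,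
    sub_zero] at hsing
  have htr : A 0 0 + A 1 1 = 2 := by linear_combination hdet - hsing
  ext i j
  fin_cases i <;> fin_cases j <;> simp [sq, mul_apply, Fin.sum_univ_two, one_apply]
  · linear_combination A 0 0 * htr - hdet
  · linear_combination A 0 1 * htr
  · linear_combination A 1 0 * htr
  · linear_combination A 1 1 * htr - hdet

namespace Matrix.SpecialLinearGroup

variable {K : Type*} [Field K] [CharZero K]

theorem eq_one_of_isOfFinOrder_of_mulVec_eq_self {A : SpecialLinearGroup (Fin 2) K}
    (hA : IsOfFinOrder A) {v : Fin 2 → K} (hv : v ≠ 0)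
    (hfix : (A : Matrix (Fin 2) (Fin 2) K) *ᵥ v = v) : A = 1 := by
  set N : Matrix (Fin 2) (Fin 2) K := A - 1 with hN
  have hsing : N.det = 0 :=
    exists_mulVec_eq_zero_iff.mp ⟨v, hv, by rw [hN, sub_mulVec, one_mulVec, hfix, sub_self]⟩
  have hpow : (1 : Matrix (Fin 2) (Fin 2) K) + orderOf A • N = 1 := by
    rw [← one_add_pow_of_sq_eq_zero (sq_sub_one_eq_zero_of_det_eq_one A.2 hsing),
      add_sub_cancel, ← coe_pow, pow_orderOf_eq_one, coe_one]
  rw [add_eq_left, ← Nat.cast_smul_eq_nsmul K, smul_eq_zero,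
    or_iff_right (Nat.cast_ne_zero.mpr hA.orderOf_pos.ne'), hN, sub_eq_zero] at hpow
  exact Subtype.ext hpow

theorem injective_mulVec_of_injective {G : Type*} [Group G] [Finite G]
    {A : G →* SpecialLinearGroup (Fin 2) K} (hA : Function.Injective A) {v : Fin 2 → K}
    (hv : v ≠ 0) : Function.Injective fun g => (A g : Matrix (Fin 2) (Fin 2) K) *ᵥ v := by
  intro g g' h
  have hfix : (A (g'⁻¹ * g) : Matrix (Fin 2) (Fin 2) K) *ᵥ v = v := by
    simp only at h
    rw [map_mul, coe_mul, ← mulVec_mulVec, h, mulVec_mulVec, ← coe_mul, ← map_mul,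
      inv_mul_cancel, map_one, coe_one, one_mulVec]
  have := eq_one_of_isOfFinOrder_of_mulVec_eq_self
    (A.isOfFinOrder (isOfFinOrder_of_finite _)) hv hfix
  rw [← map_one A] at this
  exact (inv_mul_eq_one.mp (hA this)).symm

end Matrix.SpecialLinearGroup

theorem Module.End.exists_common_eigenvector {K W : Type*} [Field K] [IsAlgClosed K]
    [AddCommGroup W] [Module K W] [FiniteDimensional K W] [Nontrivial W]
    {f g : Module.End K W} (hfg : Commute f g) :
    ∃ s : W, s ≠ 0 ∧ ∃ α β : K, f s = α • s ∧ g s = β • s := by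
  obtain ⟨α, hα⟩ := exists_eigenvalue f
  have hmaps : Set.MapsTo g (f.eigenspace α) (f.eigenspace α) :=
    mapsTo_genEigenspace_of_comm hfg α 1
  have : Nontrivial (f.eigenspace α) := Submodule.nontrivial_iff_ne_bot.mpr hα
  obtain ⟨β, hβ⟩ := exists_eigenvalue (g.restrict hmaps)
  obtain ⟨⟨s, hsα⟩, hsβ⟩ := hβ.exists_hasEigenvector
  exact ⟨s, fun h => hsβ.2 (Subtype.ext h), α, β, mem_eigenspace_iff.mp hsα,
    congr_arg Subtype.val hsβ.apply_eq_smul⟩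

namespace Representation

variable {K G W : Type*} [Field K] [Group G] [AddCommGroup W] [Module K W]
  {ρ : Representation K G W}

theorem IsIrreducible.nontrivial [IsIrreducible ρ] : Nontrivial W :=
  IsSimpleModule.nontrivial (MonoidAlgebra K G) ρ.asModule

theorem IsIrreducible.mem_of_ne_zero [IsIrreducible ρ] {p : Subrepresentation ρ} {x : W}
    (hx : x ∈ p) (hx0 : x ≠ 0) (y : W) : y ∈ p := by
  obtain rfl | rfl := IsSimpleOrder.eq_bot_or_eq_top p
  · exact absurd hx hx0
  · trivial

theorem IsIrreducible.apply_eq_self_of_mem_invariants [IsIrreducible ρ] {t : W}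
    (ht : t ∈ invariants ρ) (ht0 : t ≠ 0) (g : G) (y : W) : ρ g y = y := by
  let p : Subrepresentation ρ :=
    ⟨K ∙ t, fun g y hy => by
      obtain ⟨c, rfl⟩ := Submodule.mem_span_singleton.mp hy
      rw [map_smul, ht g]
      exact Submodule.smul_mem _ c (Submodule.mem_span_singleton_self t)⟩
  obtain ⟨c, rfl⟩ := Submodule.mem_span_singleton.mp
    (mem_of_ne_zero (p := p) (Submodule.mem_span_singleton_self t) ht0 y)
  rw [map_smul, ht g]

/-- `f` transforms under conjugation by `ρ` like the coordinates of `K²` under `A`; such pairs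
are the coordinates of the intertwiners `W → K² ⊗ W`. -/
def IsCovariant (ρ : Representation K G W) (A : G →* Matrix.SpecialLinearGroup (Fin 2) K)
    (f : Fin 2 → Module.End K W) : Prop :=
  ∀ g i m, f i (ρ g m) = ∑ j, (A g : Matrix (Fin 2) (Fin 2) K) i j • ρ g (f j m)

namespace IsCovariant

variable {A : G →* Matrix.SpecialLinearGroup (Fin 2) K} {f : Fin 2 → Module.End K W}

theorem commutator_apply (hf : IsCovariant ρ A f) (g : G) (m : W) :
    (f 0 * f 1 - f 1 * f 0) (ρ g m) = ρ g ((f 0 * f 1 - f 1 * f 0) m) := by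
  have hdet := (A g).2
  rw [Matrix.det_fin_two] at hdet
  simp only [LinearMap.sub_apply, Module.End.mul_apply, hf g _ m, Fin.sum_univ_two, map_add,
    map_smul, hf g, map_sub]
  match_scalars
  · ring
  · linear_combination -hdet
  · linear_combination hdet
  · ring

theorem commute [IsIrreducible ρ] [FiniteDimensional K W] [IsAlgClosed K] [CharZero K]
    (hf : IsCovariant ρ A f) : Commute (f 0) (f 1) := by
  have := IsIrreducible.nontrivial (ρ := ρ)
  let c : IntertwiningMap ρ ρ :=
    ⟨f 0 * f 1 - f 1 * f 0, fun g => LinearMap.ext (hf.commutator_apply g)⟩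
  obtain ⟨μ, hμ⟩ := IsIrreducible.algebraMap_intertwiningMap_bijective_of_isAlgClosed.2 c
  have hc : f 0 * f 1 - f 1 * f 0 = μ • 1 := congr_arg IntertwiningMap.toLinearMap hμ.symm
  have htr := congr_arg (LinearMap.trace K W) hc
  rw [map_sub, LinearMap.trace_mul_comm, sub_self, map_smul, LinearMap.trace_one, smul_eq_mul,
    eq_comm, mul_eq_zero, Nat.cast_eq_zero, or_iff_left finrank_pos.ne'] at htr
  rwa [htr, zero_smul, sub_eq_zero] at hc

theorem apply_eq_mulVec_smul (hf : IsCovariant ρ A f) {s : W} {v : Fin 2 → K}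
    (hs : ∀ i, f i s = v i • s) (g : G) (i : Fin 2) :
    f i (ρ g s) = ((A g : Matrix (Fin 2) (Fin 2) K) *ᵥ v) i • ρ g s := by
  simp only [hf g i s, hs, map_smul, smul_smul, Matrix.mulVec, dotProduct, Finset.sum_smul]

theorem eq_zero_of_apply_eq_zero [IsIrreducible ρ] (hf : IsCovariant ρ A f) {s : W}
    (hs0 : s ≠ 0) (hs : ∀ i, f i s = 0) : f = 0 := by
  let p : Subrepresentation ρ :=
    ⟨⨅ i, LinearMap.ker (f i), fun g m hm => by
      simp only [Submodule.mem_iInf, LinearMap.mem_ker] at hm ⊢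
      simp [hf g _ m, hm]⟩
  ext i m
  exact (Submodule.mem_iInf _).mp
    (IsIrreducible.mem_of_ne_zero (p := p) ((Submodule.mem_iInf _).mpr hs) hs0 m) i

theorem linearIndependent_orbit (hf : IsCovariant ρ A f) (hcomm : Commute (f 0) (f 1))
    {s : W} (hs0 : s ≠ 0) {v : Fin 2 → K} (hs : ∀ i, f i s = v i • s)
    (hinj : Function.Injective fun g => (A g : Matrix (Fin 2) (Fin 2) K) *ᵥ v) :
    LinearIndependent K fun g => ρ g s := by
  have hmaps (i j : Fin 2) (φ : K) :
      Set.MapsTo (f i) ((f j).maxGenEigenspace φ) ((f j).maxGenEigenspace φ) := by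
    apply Module.End.mapsTo_maxGenEigenspace_of_comm
    fin_cases i <;> fin_cases j <;> simp [hcomm, hcomm.symm]
  refine ((Module.End.independent_iInf_maxGenEigenspace_of_forall_mapsTo f hmaps).comp
    hinj).linearIndependent _ (fun g => ?_) (fun g h => hs0 ?_)
  · exact (Submodule.mem_iInf _).mpr fun i => Module.End.eigenspace_le_maxGenEigenspace
      (Module.End.mem_eigenspace_iff.mpr (hf.apply_eq_mulVec_smul hs g i))
  · simpa using congr_arg (ρ g⁻¹) h

theorem eq_zero [Finite G] [Nontrivial G] (hA : Function.Injective A) [IsIrreducible ρ]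
    [FiniteDimensional K W] [IsAlgClosed K] [CharZero K] (hf : IsCovariant ρ A f) : f = 0 := by
  have := IsIrreducible.nontrivial (ρ := ρ)
  have := Fintype.ofFinite G
  obtain ⟨s, hs0, α, β, hα, hβ⟩ := Module.End.exists_common_eigenvector hf.commute
  have hs : ∀ i, f i s = ![α, β] i • s := Fin.forall_fin_two.mpr ⟨hα, hβ⟩
  by_cases hv : ![α, β] = 0
  · exact hf.eq_zero_of_apply_eq_zero hs0 fun i => by rw [hs, hv, Pi.zero_apply, zero_smul]
  exfalso
  have hli := hf.linearIndependent_orbit hf.commute hs0 hs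
    (Matrix.SpecialLinearGroup.injective_mulVec_of_injective hA hv)
  have ht0 : ∑ g, ρ g s ≠ 0 := fun h =>
    one_ne_zero (Fintype.linearIndependent_iff.mp hli (fun _ => 1) (by simpa using h) 1)
  have ht : ∑ g, ρ g s ∈ invariants ρ := fun g => by
    simpa [map_sum, ← Module.End.mul_apply, ← map_mul] using
      Equiv.sum_comp (Equiv.mulLeft g) (ρ · s)
  obtain ⟨g, hg⟩ := exists_ne (1 : G)
  exact hg (hli.injective (by simp [IsIrreducible.apply_eq_self_of_mem_invariants ht ht0 g s]))

end IsCovariant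

end Representation

namespace FDRep

variable {k G : Type} [Field k] [Monoid G]

theorem nontrivial_of_simple_s4 (S : FDRep k G) [Simple S] : Nontrivial S := by
  by_contra h
  rw [not_nontrivial_iff_subsingleton] at h
  exact id_nonzero S (by ext; exact Subsingleton.elim _ _)

theorem isIrreducible_of_simple (S : FDRep k G) [Simple S] :
    Representation.IsIrreducible S.ρ where
  exists_pair_ne := by
    have := nontrivial_of_simple_s4 S
    obtain ⟨x, hx⟩ := exists_ne (0 : S)
    exact ⟨⊥, ⊤, fun h => hx (show x ∈ (⊥ : Subrepresentation S.ρ) from h ▸ trivial)⟩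
  eq_bot_or_eq_top p := by
    refine or_iff_not_imp_left.mpr fun hp => ?_
    let ι : FDRep.of p.toRepresentation ⟶ S :=
      ⟨FGModuleCat.ofHom p.toSubmodule.subtype, fun _ => rfl⟩
    have : Mono ι := ConcreteCategory.mono_of_injective _ p.toSubmodule.injective_subtype
    have hι : ι ≠ 0 := by
      obtain ⟨x, hx, hx0⟩ := (Submodule.ne_bot_iff _).mp
        (fun h => hp (Subrepresentation.toSubmodule_injective h))
      exact fun h0 => hx0 congr(($h0).hom ⟨x, hx⟩)
    have : IsIso ι := isIso_of_mono_of_nonzero hι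
    ext x
    refine ⟨fun _ => trivial, fun _ => ?_⟩
    have hx : ι.hom ((inv ι).hom x) = x := congr(($(IsIso.inv_hom_id ι)).hom x)
    exact hx ▸ ((inv ι).hom x).2

end FDRep

namespace SL2

variable {G : Subgroup (Matrix.SpecialLinearGroup (Fin 2) ℂ)} {S : FDRep ℂ G}

noncomputable def tensorEquivPi (S : FDRep ℂ G) :
    TensorProduct ℂ (Fin 2 → ℂ) S ≃ₗ[ℂ] (Fin 2 → S) :=
  TensorProduct.comm ℂ _ _ ≪≫ₗ TensorProduct.piScalarRight ℂ ℂ S (Fin 2)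

@[simp]
theorem tensorEquivPi_tmul (x : Fin 2 → ℂ) (m : S) :
    tensorEquivPi S (x ⊗ₜ m) = fun i => x i • m := by
  simp [tensorEquivPi]

theorem natRep_apply (g : G) (x : Fin 2 → ℂ) :
    natRep G g x = ((g : Matrix.SpecialLinearGroup (Fin 2) ℂ) : Matrix (Fin 2) (Fin 2) ℂ) *ᵥ x :=
  rfl

theorem tensorEquivPi_map (g : G) (z : TensorProduct ℂ (Fin 2 → ℂ) S) (i : Fin 2) :
    tensorEquivPi S (TensorProduct.map (natRep G g) (S.ρ g) z) i =
      ∑ j, ((g : Matrix.SpecialLinearGroup (Fin 2) ℂ) : Matrix (Fin 2) (Fin 2) ℂ) i j •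
        S.ρ g (tensorEquivPi S z j) := by
  induction z using TensorProduct.induction_on with
  | zero => simp
  | add a b ha hb => simp only [map_add, Pi.add_apply, ha, hb, smul_add, Finset.sum_add_distrib]
  | tmul x m =>
    simp only [TensorProduct.map_tmul, tensorEquivPi_tmul, natRep_apply, Matrix.mulVec,
      dotProduct, Finset.sum_smul, mul_smul, map_smul]

noncomputable def components (T : S ⟶ natV G ⊗ S) (i : Fin 2) : Module.End ℂ S :=
  LinearMap.proj i ∘ₗ (tensorEquivPi S).toLinearMap ∘ₗ T.hom.hom.hom

theorem isCovariant_components (T : S ⟶ natV G ⊗ S) :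
    Representation.IsCovariant S.ρ G.subtype (components T) := by
  intro g i m
  have hT : T.hom.hom.hom (S.ρ g m) =
      TensorProduct.map (natRep G g) (S.ρ g) (T.hom.hom.hom m) :=
    congr(($(T.comm g)).hom.hom m)
  exact (congr_fun (congr_arg (tensorEquivPi S) hT) i).trans (tensorEquivPi_map g _ i)

theorem eq_zero_of_components_eq_zero {T : S ⟶ natV G ⊗ S} (hT : components T = 0) :
    T = 0 := by
  ext m
  exact (tensorEquivPi S).injective (funext fun i => congr($hT i m))

theorem finrank_hom_natV_tensor [Finite G] [Nontrivial G] [Simple S] :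
    finrank ℂ (S ⟶ natV G ⊗ S) = 0 := by
  have := FDRep.isIrreducible_of_simple S
  have : Subsingleton (S ⟶ natV G ⊗ S) := ⟨fun T T' => by
    rw [eq_zero_of_components_eq_zero ((isCovariant_components T).eq_zero G.subtype_injective),
      eq_zero_of_components_eq_zero ((isCovariant_components T').eq_zero G.subtype_injective)]⟩
  exact finrank_zero_of_subsingleton

end SL2

namespace CategoryTheory.Linear

variable {R C : Type*} [Semiring R] [Category C] [Preadditive C] [Linear R C]

noncomputable def homBiprodEquiv (S A B : C) [HasBinaryBiproduct A B] :
    (S ⟶ A ⊞ B) ≃ₗ[R] (S ⟶ A) × (S ⟶ B) where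
  toFun f := (f ≫ biprod.fst, f ≫ biprod.snd)
  map_add' f g := by simp
  map_smul' c f := by simp
  invFun p := biprod.lift p.1 p.2
  left_inv f := by ext <;> simp
  right_inv p := by simp

end CategoryTheory.Linear

/-- For a finite subgroup `G` of `SL(2, ℂ)` with `|G| ≥ 2`, the natural representation `V`,
and a simple finite-dimensional complex representation `S` of `G`,
`dim Hom_G(S, (V ⊕ 𝟙) ⊗ S) = 1`: in the McKay quiver of `G` embedded into `SL(3, ℂ)` via
`g ↦ diag(g, 1)`, there is exactly one loop at each vertex. -/
theorem mckay_sl2_in_sl3_one_loop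
    (G : Subgroup (Matrix.SpecialLinearGroup (Fin 2) ℂ)) [Finite G]
    (hG : 2 ≤ Nat.card G)
    (S : FDRep ℂ G) [Simple S] :
    finrank ℂ (S ⟶ (SL2.natV G ⊞ 𝟙_ (FDRep ℂ G)) ⊗ S) = 1 := by
  have : Nontrivial G := Finite.one_lt_card_iff_nontrivial.mp hG
  have := preservesBinaryBiproducts_of_preservesBiproducts (tensorRight S)
  calc finrank ℂ (S ⟶ (SL2.natV G ⊞ 𝟙_ (FDRep ℂ G)) ⊗ S)
      = finrank ℂ (S ⟶ (SL2.natV G ⊗ S) ⊞ (𝟙_ (FDRep ℂ G) ⊗ S)) :=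
        (Linear.homCongr ℂ (Iso.refl S) ((tensorRight S).mapBiprod _ _)).finrank_eq
    _ = finrank ℂ (S ⟶ SL2.natV G ⊗ S) + finrank ℂ (S ⟶ 𝟙_ (FDRep ℂ G) ⊗ S) := by
        rw [(Linear.homBiprodEquiv S _ _).finrank_eq, finrank_prod]
    _ = finrank ℂ (S ⟶ S) := by
        rw [SL2.finrank_hom_natV_tensor, zero_add,
          (Linear.homCongr ℂ (Iso.refl S) (λ_ S)).finrank_eq]
    _ = 1 := finrank_endomorphism_simple_eq_one ℂ S
end

section
/- Let G be a finite subgroup of SL(2, ℂ), let V be the natural two-dimensional representation of G, and let S and T be simple finite-dimensional complex representations of G. Then dim_ℂ Hom_G(T, V ⊗ S) = dim_ℂ Hom_G(S, V ⊗ T). (Equivalently: in the McKay quiver of G ⊂ SL(2,ℂ), there is an arrow from S to T if and only if there is an arrow from T to S, with the same multiplicity.) -/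
/-!
Over a field of characteristic zero, `dim Hom_G(X, V ⊗ Y)` is the character inner product
`|G|⁻¹ ∑_g χ_X(g⁻¹) χ_V(g) χ_Y(g)`, and the substitution `g ↦ g⁻¹` turns it into the one for
`(Y, X)` as soon as `χ_V(g⁻¹) = χ_V(g)`. For the natural representation of `G ⊆ SL(2, ℂ)`,
`χ_V(g) = tr g`, and `tr g⁻¹ = tr (adj g) = tr g` for a `2 × 2` matrix of determinant one.
-/

open CategoryTheory CategoryTheory.MonoidalCategory Module

theorem Matrix.SpecialLinearGroup.trace_inv_fin_two {R : Type*} [CommRing R]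
    (A : Matrix.SpecialLinearGroup (Fin 2) R) :
    ((A⁻¹ : Matrix.SpecialLinearGroup (Fin 2) R) : Matrix (Fin 2) (Fin 2) R).trace =
      (A : Matrix (Fin 2) (Fin 2) R).trace := by
  rw [Matrix.SpecialLinearGroup.coe_inv, Matrix.adjugate_fin_two, Matrix.trace_fin_two,
    Matrix.trace_fin_two]
  simp [add_comm]

namespace FDRep

variable {k G : Type*} [Field k] [Group G]

theorem finrank_hom_tensor_comm_of_character_inv [CharZero k] [Fintype G] (V : FDRep k G)
    (hV : ∀ g, V.character g⁻¹ = V.character g) (X Y : FDRep k G) :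
    finrank k (X ⟶ V ⊗ Y) = finrank k (Y ⟶ V ⊗ X) := by
  have : Invertible (Nat.card G : k) :=
    invertibleOfNonzero (Nat.cast_ne_zero.mpr Nat.card_pos.ne')
  apply Nat.cast_injective (R := k)
  rw [← scalar_product_char_eq_finrank_equivariant, ← scalar_product_char_eq_finrank_equivariant]
  congr 1
  refine Fintype.sum_equiv (Equiv.inv G) _ _ fun g => ?_
  simp only [Equiv.inv_apply, inv_inv, char_tensor, Pi.mul_apply, hV]
  ring

end FDRep

theorem SL2.natV_character (G : Subgroup (Matrix.SpecialLinearGroup (Fin 2) ℂ)) (g : G) :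
    (SL2.natV G).character g = ((g : Matrix.SpecialLinearGroup (Fin 2) ℂ) :
      Matrix (Fin 2) (Fin 2) ℂ).trace := by
  change LinearMap.trace ℂ (Fin 2 → ℂ) (Matrix.toLin' _) = _
  rw [LinearMap.trace_eq_matrix_trace ℂ (Pi.basisFun ℂ (Fin 2)),
    LinearMap.toMatrix_eq_toMatrix', LinearMap.toMatrix'_toLin', Subgroup.coe_subtype]

theorem SL2.natV_character_inv (G : Subgroup (Matrix.SpecialLinearGroup (Fin 2) ℂ)) (g : G) :
    (SL2.natV G).character g⁻¹ = (SL2.natV G).character g := by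
  rw [SL2.natV_character, SL2.natV_character, Subgroup.coe_inv,
    Matrix.SpecialLinearGroup.trace_inv_fin_two]

theorem mckay_sl2_symmetric_general
    (G : Subgroup (Matrix.SpecialLinearGroup (Fin 2) ℂ)) [Finite G]
    (S T : FDRep ℂ G) :
    finrank ℂ (T ⟶ SL2.natV G ⊗ S) = finrank ℂ (S ⟶ SL2.natV G ⊗ T) :=
  have : Fintype G := Fintype.ofFinite G
  FDRep.finrank_hom_tensor_comm_of_character_inv _ (SL2.natV_character_inv G) T S

/-- For a finite subgroup `G` of `SL(2, ℂ)`, the natural representation `V`, and simple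
finite-dimensional complex representations `S`, `T` of `G`,
`dim Hom_G(T, V ⊗ S) = dim Hom_G(S, V ⊗ T)`: in the McKay quiver of `G ⊂ SL(2, ℂ)` there
is an arrow from `S` to `T` iff there is one from `T` to `S`, with the same multiplicity. -/
theorem mckay_sl2_symmetric
    (G : Subgroup (Matrix.SpecialLinearGroup (Fin 2) ℂ)) [Finite G]
    (S T : FDRep ℂ G) [Simple S] [Simple T] :
    finrank ℂ (T ⟶ SL2.natV G ⊗ S) = finrank ℂ (S ⟶ SL2.natV G ⊗ T) :=
  mckay_sl2_symmetric_general G S T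
end

section
/- Let Q be a weakly connected quiver. For each k ∈ ℤ, the shift σ_k : (i, n) ↦ (i, n + k) is an automorphism of the separated quiver ℤ_v Q. Then for any two weakly connected components c₁ and c₂ of ℤ_v Q there exists k ∈ ℤ such that the map on weakly connected components induced by σ_k sends c₁ to c₂; in particular, all weakly connected components of ℤ_v Q are isomorphic to each other as quivers (as full subquivers of ℤ_v Q). -/
/-- The separated quiver `ℤ_v Q` of a quiver `Q`: the vertices are `Q × ℤ`, and for each
arrow `α : i ⟶ j` of `Q` and each `n : ℤ` there is one arrow `(i, n) ⟶ (j, n + 1)`. -/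
instance sepQuiver (Q : Type) [Quiver Q] : Quiver (Q × ℤ) :=
  ⟨fun p q => (p.1 ⟶ q.1) × PLift (q.2 = p.2 + 1)⟩

/-- The shift `σ_k : (i, n) ↦ (i, n + k)` as a prefunctor (in fact an automorphism) of the
separated quiver `ℤ_v Q`. -/
def sepShift (Q : Type) [Quiver Q] (k : ℤ) : (Q × ℤ) ⥤q (Q × ℤ) where
  obj p := (p.1, p.2 + k)
  map {p q} e := ⟨e.1, PLift.up (by show q.2 + k = p.2 + k + 1; rw [e.2.down]; ring)⟩

open Quiver

/-- Any zigzag in `Q` lifts to a zigzag in the separated quiver starting at any level. -/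
lemma sep_lift {Q : Type} [Quiver Q] {i j : Q}
    (p : @Path (Symmetrify Q) _ i j) (n : ℤ) :
    ∃ d : ℤ, Nonempty (@Path (Symmetrify (Q × ℤ)) _ ((i, n) : Q × ℤ) ((j, d) : Q × ℤ)) := by
  induction p with
  | nil => exact ⟨n, ⟨Path.nil⟩⟩
  | cons q e ih =>
    obtain ⟨d, ⟨pth⟩⟩ := ih
    change _ ⊕ _ at e
    cases e with
    | inl a =>
      exact ⟨d + 1, ⟨pth.cons (Sum.inl ⟨a, PLift.up rfl⟩)⟩⟩
    | inr a =>
      refine ⟨d - 1, ⟨pth.cons (Sum.inr ⟨a, PLift.up ?_⟩)⟩⟩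
      simp

/-- Shifting preserves zigzag-connectedness. -/
lemma sep_shift_conn {Q : Type} [Quiver Q] (k : ℤ) {x y : Q × ℤ}
    (h : Nonempty (@Path (Symmetrify (Q × ℤ)) _ x y)) :
    Nonempty (@Path (Symmetrify (Q × ℤ)) _
      (((sepShift Q k).obj x) : Q × ℤ) (((sepShift Q k).obj y) : Q × ℤ)) :=
  ⟨(sepShift Q k).symmetrify.mapPath h.some⟩

/-- If `Q` is a weakly connected quiver, then for any two weakly connected components
`c₁`, `c₂` of the separated quiver `ℤ_v Q` there is a shift `σ_k : (i, n) ↦ (i, n + k)`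
whose induced map on weakly connected components sends `c₁` to `c₂`; in particular all
components of `ℤ_v Q` are isomorphic to each other. -/
theorem sep_components_all_isomorphic
    (Q : Type) [Quiver Q] [Nonempty Q]
    [Subsingleton (Quiver.WeaklyConnectedComponent Q)]
    (c₁ c₂ : Quiver.WeaklyConnectedComponent (Q × ℤ)) :
    ∃ k : ℤ, ∀ x : Q × ℤ,
      Quiver.WeaklyConnectedComponent.mk x = c₁ →
        Quiver.WeaklyConnectedComponent.mk ((sepShift Q k).obj x) = c₂ := by
  obtain ⟨x₁, rfl⟩ := Quotient.exists_rep c₁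
  obtain ⟨x₂, rfl⟩ := Quotient.exists_rep c₂
  -- x₁.1 and x₂.1 are connected in Q
  have hQ : (Quiver.WeaklyConnectedComponent.mk x₁.1 : Quiver.WeaklyConnectedComponent Q)
      = Quiver.WeaklyConnectedComponent.mk x₂.1 := Subsingleton.elim _ _
  obtain ⟨p⟩ := (Quiver.WeaklyConnectedComponent.eq _ _).mp hQ
  obtain ⟨d, ⟨pth⟩⟩ := sep_lift p x₁.2
  refine ⟨x₂.2 - d, fun x hx => ?_⟩
  have h1 : Nonempty (@Path (Symmetrify (Q × ℤ)) _ x x₁) :=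
    (Quiver.WeaklyConnectedComponent.eq _ _).mp hx
  have h2 : Nonempty (@Path (Symmetrify (Q × ℤ)) _ (x₁.1, x₁.2) ((x₂.1, d) : Q × ℤ)) := ⟨pth⟩
  have h3 : Nonempty (@Path (Symmetrify (Q × ℤ)) _ x ((x₂.1, d) : Q × ℤ)) :=
    ⟨h1.some.comp h2.some⟩
  have h4 := sep_shift_conn (x₂.2 - d) h3
  refine (Quiver.WeaklyConnectedComponent.eq _ _).mpr ?_
  have : ((sepShift Q (x₂.2 - d)).obj ((x₂.1, d) : Q × ℤ)) = x₂ := by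
    show (x₂.1, d + (x₂.2 - d)) = x₂
    rw [add_sub_cancel]
  rwa [this] at h4
end

section
/- Let Q be a weakly connected quiver containing an oriented cycle of length ℓ (a path of length ℓ ≥ 1 from some vertex of Q to itself). Then for every vertex i of Q and every n ∈ ℤ, the vertices (i, n) and (i, n + ℓ) lie in the same weakly connected component of the separated quiver ℤ_v Q. -/
namespace SepAux

open Quiver

lemma mk_eq_of_hom {V : Type} [Quiver V] {a b : V} (f : a ⟶ b) :
    Quiver.WeaklyConnectedComponent.mk a = Quiver.WeaklyConnectedComponent.mk b :=
  Quotient.sound' ⟨Quiver.Path.nil.cons (Sum.inl f : @Quiver.Hom (Quiver.Symmetrify V) _ a b)⟩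

lemma sep_step {Q : Type} [Quiver Q] {a b : Q} (f : a ⟶ b) (n : ℤ) :
    Quiver.WeaklyConnectedComponent.mk ((a, n) : Q × ℤ) =
      Quiver.WeaklyConnectedComponent.mk ((b, n + 1) : Q × ℤ) :=
  mk_eq_of_hom (⟨f, ⟨rfl⟩⟩ : ((a, n) : Q × ℤ) ⟶ (b, n + 1))

lemma sep_path {Q : Type} [Quiver Q] {a b : Q} (p : Quiver.Path a b) (n : ℤ) :
    Quiver.WeaklyConnectedComponent.mk ((a, n) : Q × ℤ) =
      Quiver.WeaklyConnectedComponent.mk ((b, n + (p.length : ℤ)) : Q × ℤ) := by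
  induction p with
  | nil => simp
  | cons q f ih =>
      have he : n + (q.length : ℤ) + 1 = n + ((q.cons f).length : ℤ) := by
        simp [Quiver.Path.length_cons]; push_cast; ring
      rw [ih, sep_step f, he]

/-- The key invariant. -/
def C {Q : Type} [Quiver Q] (ℓ : ℕ) (i : Q) : Prop :=
  ∀ n : ℤ, Quiver.WeaklyConnectedComponent.mk ((i, n) : Q × ℤ) =
    Quiver.WeaklyConnectedComponent.mk ((i, n + (ℓ : ℤ)) : Q × ℤ)

lemma C_of_hom {Q : Type} [Quiver Q] {ℓ : ℕ} {a b : Q} (f : a ⟶ b) (hb : C ℓ b) : C ℓ a := by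
  intro n
  rw [sep_step f n, hb (n + 1), sep_step f (n + ℓ)]
  congr 2
  ring

lemma C_of_hom' {Q : Type} [Quiver Q] {ℓ : ℕ} {a b : Q} (f : b ⟶ a) (hb : C ℓ b) : C ℓ a := by
  intro n
  have h1 := sep_step f (n - 1)
  have h2 := sep_step f (n - 1 + ℓ)
  simp only [sub_add_cancel] at h1 h2
  rw [← h1, hb (n - 1), h2]
  congr 2
  ring

lemma C_of_zigzag {Q : Type} [Quiver Q] {ℓ : ℕ} {a b : Q}
    (p : @Quiver.Path (Quiver.Symmetrify Q) _ a b) (hb : C ℓ b) : C ℓ a := by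
  induction p with
  | nil => exact hb
  | cons q f ih =>
      rcases f with f | f
      · exact ih (C_of_hom f hb)
      · exact ih (C_of_hom' f hb)

end SepAux

/-- If a weakly connected quiver `Q` contains an oriented cycle of length `ℓ ≥ 1`, then
for every vertex `i` of `Q` and every `n : ℤ`, the vertices `(i, n)` and `(i, n + ℓ)` lie
in the same weakly connected component of the separated quiver `ℤ_v Q`. -/
theorem sep_component_shift_cycle_length
    (Q : Type) [Quiver Q] [Nonempty Q]
    [Subsingleton (Quiver.WeaklyConnectedComponent Q)]
    (ℓ : ℕ) (hℓ : 1 ≤ ℓ) (v : Q) (p : Quiver.Path v v) (hp : p.length = ℓ)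
    (i : Q) (n : ℤ) :
    Quiver.WeaklyConnectedComponent.mk ((i, n) : Q × ℤ) =
      Quiver.WeaklyConnectedComponent.mk ((i, n + (ℓ : ℤ)) : Q × ℤ) := by
  have hv : SepAux.C ℓ v := by
    intro m
    have := SepAux.sep_path p m
    rwa [hp] at this
  have hconn : Quiver.WeaklyConnectedComponent.mk i = Quiver.WeaklyConnectedComponent.mk v :=
    Subsingleton.elim _ _
  obtain ⟨z⟩ := Quotient.exact' hconn
  exact SepAux.C_of_zigzag z hv n
end

section
/- Let Q be a weakly connected quiver containing at least one oriented cycle, and let d be the greatest common divisor of the lengths of all oriented cycles of Q. Then for every vertex i of Q and every n ∈ ℤ, the vertices (i, n) and (i, n + d) lie in the same weakly connected component of the separated quiver ℤ_v Q; consequently ℤ_v Q has at most d weakly connected components (there is a surjection from Fin d onto the set of weakly connected components of ℤ_v Q). -/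
open Quiver

namespace Quiver.WeaklyConnectedComponent

variable {V : Type*} [Quiver V]

theorem mk_surjective : Function.Surjective (WeaklyConnectedComponent.mk : V → _) :=
  @Quotient.mk'_surjective _ (zigzagSetoid V)

theorem mk_eq_of_hom {a b : V} (e : a ⟶ b) :
    WeaklyConnectedComponent.mk a = WeaklyConnectedComponent.mk b :=
  (WeaklyConnectedComponent.eq a b).2 ⟨(Symmetrify.of.map e).toPath⟩

theorem nonempty_zigzag [Subsingleton (WeaklyConnectedComponent V)] (a b : V) :
    Nonempty (@Path (Symmetrify V) _ a b) :=
  (WeaklyConnectedComponent.eq a b).1 (Subsingleton.elim _ _)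

end Quiver.WeaklyConnectedComponent

namespace sepQuiver

open WeaklyConnectedComponent

variable {Q : Type} [Quiver Q]

theorem mk_eq_mk_add_length {v w : Q} (p : Path v w) (n : ℤ) :
    WeaklyConnectedComponent.mk ((v, n) : Q × ℤ) =
      WeaklyConnectedComponent.mk ((w, n + p.length) : Q × ℤ) := by
  induction p with
  | nil => simp
  | @cons b c p e ih =>
    have arrow : ((b, n + p.length) : Q × ℤ) ⟶ (c, n + p.length + 1) := ⟨e, ⟨rfl⟩⟩
    rw [ih, mk_eq_of_hom arrow, Path.length_cons, Nat.cast_succ, add_assoc]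

theorem exists_shift_of_zigzag {a b : Q} (p : @Path (Symmetrify Q) _ a b) :
    ∃ s : ℤ, ∀ n : ℤ, WeaklyConnectedComponent.mk ((a, n) : Q × ℤ) =
      WeaklyConnectedComponent.mk ((b, n + s) : Q × ℤ) := by
  induction p with
  | nil => exact ⟨0, fun n => by simp⟩
  | @cons b c p e ih =>
    obtain ⟨s, hs⟩ := ih
    rcases e with e | e
    · refine ⟨s + 1, fun n => ?_⟩
      have arrow : ((b, n + s) : Q × ℤ) ⟶ (c, n + (s + 1)) := ⟨e, ⟨by ring⟩⟩
      rw [hs, mk_eq_of_hom arrow]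
    · refine ⟨s - 1, fun n => ?_⟩
      have arrow : ((c, n + (s - 1)) : Q × ℤ) ⟶ (b, n + s) := ⟨e, ⟨by ring⟩⟩
      rw [hs, mk_eq_of_hom arrow]

theorem exists_shift [Subsingleton (WeaklyConnectedComponent Q)] (a b : Q) :
    ∃ s : ℤ, ∀ n : ℤ, WeaklyConnectedComponent.mk ((a, n) : Q × ℤ) =
      WeaklyConnectedComponent.mk ((b, n + s) : Q × ℤ) :=
  let ⟨p⟩ := nonempty_zigzag a b
  exists_shift_of_zigzag p

variable (Q) in
def periods : AddSubgroup ℤ where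
  carrier := {k | ∀ (i : Q) (n : ℤ), WeaklyConnectedComponent.mk ((i, n) : Q × ℤ) =
    WeaklyConnectedComponent.mk ((i, n + k) : Q × ℤ)}
  zero_mem' := by simp
  add_mem' {k l} hk hl i n := by rw [hk i n, hl i (n + k), add_assoc]
  neg_mem' {k} hk i n := by simpa using (hk i (n + -k)).symm

theorem length_mem_periods [Subsingleton (WeaklyConnectedComponent Q)] {v : Q} (p : Path v v) :
    (p.length : ℤ) ∈ periods Q := fun i n => by
  obtain ⟨s, hs⟩ := exists_shift i v
  rw [hs, hs, mk_eq_mk_add_length p (n + s), add_right_comm]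

theorem natCast_mem_periods [Subsingleton (WeaklyConnectedComponent Q)] {d : ℕ}
    (hgreatest : ∀ e : ℕ, (∀ (v : Q) (p : Path v v), 0 < p.length → e ∣ p.length) → e ∣ d) :
    (d : ℤ) ∈ periods Q := by
  obtain ⟨g, hg⟩ := Int.subgroup_cyclic (periods Q)
  rw [← AddSubgroup.zmultiples_eq_closure] at hg
  have hg_dvd : g.natAbs ∣ d := hgreatest _ fun v p _ => by
    have hmem := length_mem_periods p
    rw [hg, Int.mem_zmultiples_iff] at hmem
    exact_mod_cast Int.natAbs_dvd_natAbs.2 hmem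
  rw [hg, Int.mem_zmultiples_iff, ← Int.natAbs_dvd]
  exact_mod_cast hg_dvd

theorem mk_emod_of_mem_periods {d : ℤ} (hd : d ∈ periods Q) (i : Q) (n : ℤ) :
    WeaklyConnectedComponent.mk ((i, n % d) : Q × ℤ) =
      WeaklyConnectedComponent.mk ((i, n) : Q × ℤ) := by
  have hmul : d * (n / d) ∈ periods Q := by
    simpa [mul_comm] using (periods Q).zsmul_mem hd (n / d)
  rw [hmul i, Int.emod_add_mul_ediv]

theorem surjective_mk_fin [Subsingleton (WeaklyConnectedComponent Q)] (v : Q) {d : ℕ}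
    (hd_pos : 0 < d) (hd : (d : ℤ) ∈ periods Q) :
    Function.Surjective fun k : Fin d => WeaklyConnectedComponent.mk ((v, k) : Q × ℤ) := by
  intro c
  obtain ⟨⟨j, m⟩, rfl⟩ := mk_surjective c
  obtain ⟨s, hs⟩ := exists_shift j v
  have h_nonneg : 0 ≤ (m + s) % d := Int.emod_nonneg _ (by omega)
  have h_lt : (m + s) % d < d := Int.emod_lt_of_pos _ (by omega)
  refine ⟨⟨((m + s) % d).toNat, by omega⟩, ?_⟩
  simp only [Int.toNat_of_nonneg h_nonneg, hs, mk_emod_of_mem_periods hd]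

end sepQuiver

open sepQuiver in
theorem sep_components_at_most_gcd_general
    (Q : Type) [Quiver Q]
    [Subsingleton (Quiver.WeaklyConnectedComponent Q)]
    (hcyc : ∃ (v : Q) (p : Quiver.Path v v), 0 < p.length)
    (d : ℕ)
    (hdvd : ∀ (v : Q) (p : Quiver.Path v v), 0 < p.length → d ∣ p.length)
    (hgreatest : ∀ e : ℕ,
      (∀ (v : Q) (p : Quiver.Path v v), 0 < p.length → e ∣ p.length) → e ∣ d) :
    (∀ (i : Q) (n : ℤ),
        Quiver.WeaklyConnectedComponent.mk ((i, n) : Q × ℤ) =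
          Quiver.WeaklyConnectedComponent.mk ((i, n + (d : ℤ)) : Q × ℤ)) ∧
      ∃ f : Fin d → Quiver.WeaklyConnectedComponent (Q × ℤ), Function.Surjective f := by
  obtain ⟨v, p, hp⟩ := hcyc
  have hd : (d : ℤ) ∈ periods Q := natCast_mem_periods hgreatest
  exact ⟨hd, _, surjective_mk_fin v (Nat.pos_of_dvd_of_pos (hdvd v p hp) hp) hd⟩

/-- Let `Q` be a weakly connected quiver containing at least one oriented cycle, and let
`d` be the greatest common divisor of the lengths of all oriented cycles of `Q`. Then
for every vertex `i` and every `n : ℤ`, the vertices `(i, n)` and `(i, n + d)` lie in the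
same weakly connected component of `ℤ_v Q`; consequently `ℤ_v Q` has at most `d` weakly
connected components. -/
theorem sep_components_at_most_gcd
    (Q : Type) [Quiver Q] [Nonempty Q]
    [Subsingleton (Quiver.WeaklyConnectedComponent Q)]
    (hcyc : ∃ (v : Q) (p : Quiver.Path v v), 0 < p.length)
    (d : ℕ)
    (hdvd : ∀ (v : Q) (p : Quiver.Path v v), 0 < p.length → d ∣ p.length)
    (hgreatest : ∀ e : ℕ,
      (∀ (v : Q) (p : Quiver.Path v v), 0 < p.length → e ∣ p.length) → e ∣ d) :
    (∀ (i : Q) (n : ℤ),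
        Quiver.WeaklyConnectedComponent.mk ((i, n) : Q × ℤ) =
          Quiver.WeaklyConnectedComponent.mk ((i, n + (d : ℤ)) : Q × ℤ)) ∧
      ∃ f : Fin d → Quiver.WeaklyConnectedComponent (Q × ℤ), Function.Surjective f :=
  sep_components_at_most_gcd_general Q hcyc d hdvd hgreatest
end

section
/- Let s, r ≥ 4 be integers and let Q̃(s, r) be the quiver with vertex set (ℤ/sℤ) × (ℤ/rℤ) and, for each vertex i, exactly three arrows starting at i: one arrow i → i + (1, 0), one arrow i → i + (0, 1), and one arrow i → i − (1, 1). Then the separated quiver ℤ_v Q̃(s, r) has exactly 3 weakly connected components if 3 divides s and 3 divides r, and exactly 1 weakly connected component (i.e., it is weakly connected) otherwise. -/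
/-- The arrows of the McKay quiver `Q̃(s, r)` of the abelian subgroup `ℤ/sℤ × ℤ/rℤ` of
`SL(3, ℂ)`: out of each vertex `i` there are exactly three arrows,
`i → i + (1, 0)`, `i → i + (0, 1)` and `i → i - (1, 1)`. -/
inductive McKayArrow (s r : ℕ) : ZMod s × ZMod r → ZMod s × ZMod r → Type
  | a (i : ZMod s × ZMod r) : McKayArrow s r i (i + ((1 : ZMod s), (0 : ZMod r)))
  | b (i : ZMod s × ZMod r) : McKayArrow s r i (i + ((0 : ZMod s), (1 : ZMod r)))
  | c (i : ZMod s × ZMod r) : McKayArrow s r i (i - ((1 : ZMod s), (1 : ZMod r)))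

/-- The McKay quiver `Q̃(s, r)` as a quiver on the vertex set `ℤ/sℤ × ℤ/rℤ`. -/
instance mckayQuiver (s r : ℕ) : Quiver (ZMod s × ZMod r) :=
  ⟨McKayArrow s r⟩

open Quiver

namespace SepMcKay

variable {s r : ℕ}

def Rel (s r : ℕ) (a b : (ZMod s × ZMod r) × ℤ) : Prop :=
  (zigzagSetoid ((ZMod s × ZMod r) × ℤ)).r a b

lemma Rel.refl (a : (ZMod s × ZMod r) × ℤ) : Rel s r a a := (zigzagSetoid _).refl a
lemma Rel.symm {a b} (h : Rel s r a b) : Rel s r b a := (zigzagSetoid _).symm h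
lemma Rel.trans {a b c} (h : Rel s r a b) (h' : Rel s r b c) : Rel s r a c :=
  (zigzagSetoid _).trans h h'

lemma rel_of_hom {a b : (ZMod s × ZMod r) × ℤ} (e : a ⟶ b) : Rel s r a b :=
  ⟨Quiver.Path.cons Quiver.Path.nil (Sum.inl e)⟩

lemma rel_cast {a b a' b' : (ZMod s × ZMod r) × ℤ} (ha : a = a') (hb : b = b')
    (h : Rel s r a b) : Rel s r a' b' := ha ▸ hb ▸ h

lemma relA (p : ZMod s × ZMod r) (n : ℤ) :
    Rel s r (p, n) (p + ((1 : ZMod s), (0 : ZMod r)), n + 1) :=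
  rel_of_hom ⟨McKayArrow.a p, ⟨rfl⟩⟩

lemma relB (p : ZMod s × ZMod r) (n : ℤ) :
    Rel s r (p, n) (p + ((0 : ZMod s), (1 : ZMod r)), n + 1) :=
  rel_of_hom ⟨McKayArrow.b p, ⟨rfl⟩⟩

lemma relC (p : ZMod s × ZMod r) (n : ℤ) :
    Rel s r (p, n) (p - ((1 : ZMod s), (1 : ZMod r)), n + 1) :=
  rel_of_hom ⟨McKayArrow.c p, ⟨rfl⟩⟩


lemma rel_shift3 (p : ZMod s × ZMod r) (n : ℤ) : Rel s r (p, n) (p, n + 3) := by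
  refine ((relA p n).trans ((relB _ _).trans ?_))
  refine rel_cast rfl ?_ (relC (p + (1,0) + (0,1)) (n + 1 + 1))
  refine Prod.ext ?_ (by ring)
  show p + (1,0) + (0,1) - (1,1) = p
  have : ((1:ZMod s),(0:ZMod r)) + ((0:ZMod s),(1:ZMod r)) = ((1:ZMod s),(1:ZMod r)) := by
    simp [Prod.ext_iff]
  rw [add_assoc, this, add_sub_cancel_right]

lemma rel_Ak (p : ZMod s × ZMod r) (n : ℤ) (k : ℕ) :
    Rel s r (p, n) (p + (((k : ZMod s)), (0 : ZMod r)), n + k) := by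
  induction k with
  | zero => exact rel_cast rfl (by simp) (Rel.refl _)
  | succ k ih =>
      refine ih.trans (rel_cast rfl ?_ (relA _ _))
      refine Prod.ext ?_ (by push_cast; ring)
      show p + ((k : ZMod s), 0) + (1, 0) = p + ((((k : ℕ) + 1 : ℕ) : ZMod s), 0)
      push_cast
      rw [add_assoc]
      congr 1
      simp [Prod.ext_iff]

lemma rel_Bk (p : ZMod s × ZMod r) (n : ℤ) (k : ℕ) :
    Rel s r (p, n) (p + ((0 : ZMod s), ((k : ZMod r))), n + k) := by
  induction k with
  | zero => exact rel_cast rfl (by simp) (Rel.refl _)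
  | succ k ih =>
      refine ih.trans (rel_cast rfl ?_ (relB _ _))
      refine Prod.ext ?_ (by push_cast; ring)
      show p + (0, (k : ZMod r)) + (0, 1) = p + (0, (((k : ℕ) + 1 : ℕ) : ZMod r))
      push_cast
      rw [add_assoc]
      congr 1
      simp [Prod.ext_iff]

lemma rel_shift3k (p : ZMod s × ZMod r) (n : ℤ) (k : ℕ) :
    Rel s r (p, n) (p, n + 3 * k) := by
  induction k with
  | zero => exact rel_cast rfl (by simp) (Rel.refl _)
  | succ k ih => exact ih.trans (rel_cast rfl (by push_cast; ring_nf) (rel_shift3 p (n + 3*k)))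

/-- reduce to (0,0) -/
lemma rel_to_base [NeZero s] [NeZero r] (a : ZMod s) (b : ZMod r) (n : ℤ) :
    Rel s r ((a, b), n) (((0 : ZMod s), (0 : ZMod r)), n - a.val - b.val) := by
  have h1 : Rel s r (((0 : ZMod s), b), n - a.val) ((a, b), n) := by
    refine rel_cast rfl ?_ (rel_Ak ((0 : ZMod s), b) (n - a.val) a.val)
    refine Prod.ext ?_ (by ring)
    show ((0 : ZMod s), b) + ((a.val : ZMod s), 0) = (a, b)
    simp [Prod.ext_iff, ZMod.natCast_val, ZMod.cast_id]
  have h2 : Rel s r (((0 : ZMod s), (0 : ZMod r)), n - a.val - b.val) (((0:ZMod s), b), n - a.val) := by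
    refine rel_cast rfl ?_ (rel_Bk ((0 : ZMod s), (0 : ZMod r)) (n - a.val - b.val) b.val)
    refine Prod.ext ?_ (by ring)
    show ((0 : ZMod s), (0:ZMod r)) + (0, (b.val : ZMod r)) = ((0:ZMod s), b)
    simp [Prod.ext_iff, ZMod.natCast_val, ZMod.cast_id]
  exact (h2.trans h1).symm


lemma rel_shiftS [NeZero s] (p : ZMod s × ZMod r) (n : ℤ) (k : ℕ) :
    Rel s r (p, n) (p, n + s * k) := by
  induction k with
  | zero => exact rel_cast rfl (by simp) (Rel.refl _)
  | succ k ih =>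
      refine ih.trans (rel_cast rfl ?_ (rel_Ak p (n + s*k) s))
      refine Prod.ext ?_ (by push_cast; ring)
      show p + ((s : ZMod s), 0) = p
      simp [Prod.ext_iff, ZMod.natCast_self]

lemma rel_shiftR [NeZero r] (p : ZMod s × ZMod r) (n : ℤ) (k : ℕ) :
    Rel s r (p, n) (p, n + r * k) := by
  induction k with
  | zero => exact rel_cast rfl (by simp) (Rel.refl _)
  | succ k ih =>
      refine ih.trans (rel_cast rfl ?_ (rel_Bk p (n + r*k) r))
      refine Prod.ext ?_ (by push_cast; ring)
      show p + (0, (r : ZMod r)) = p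
      simp [Prod.ext_iff, ZMod.natCast_self]

lemma exists_bezout (m : ℕ) (hm : 4 ≤ m) (h : ¬ 3 ∣ m) : ∃ x q : ℕ, 3 * x = m * q + 1 := by
  have : NeZero m := ⟨by omega⟩
  have hcop : Nat.Coprime 3 m := (Nat.prime_three.coprime_iff_not_dvd).mpr h
  have hu : IsUnit ((3 : ℕ) : ZMod m) := (ZMod.isUnit_iff_coprime 3 m).mpr hcop
  set x : ℕ := (hu.unit⁻¹ : (ZMod m)ˣ).val.val with hxdef
  have h1 : ((3 * x : ℕ) : ZMod m) = ((1 : ℕ) : ZMod m) := by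
    push_cast
    simp [hxdef, ZMod.natCast_val, ZMod.cast_id]
  have h2 : 3 * x % m = 1 % m := (ZMod.natCast_eq_natCast_iff _ _ _).mp h1
  have h3 : (1:ℕ) % m = 1 := Nat.mod_eq_of_lt (by omega)
  have hdm := Nat.div_add_mod (3*x) m
  exact ⟨x, 3*x/m, by omega⟩

/-- up one level when some modulus is coprime to 3 -/
lemma rel_up (hsr : ¬ (3 ∣ s) ∨ ¬ (3 ∣ r)) (hs : 4 ≤ s) (hr : 4 ≤ r) (n : ℤ) :
    Rel s r (((0 : ZMod s), (0 : ZMod r)), n) (((0 : ZMod s), (0 : ZMod r)), n + 1) := by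
  have : NeZero s := ⟨by omega⟩
  have : NeZero r := ⟨by omega⟩
  obtain h | h := hsr
  · obtain ⟨x, q, hxq⟩ := exists_bezout s hs h
    have h1 : Rel s r (((0:ZMod s),(0:ZMod r)), n) (((0:ZMod s),(0:ZMod r)), n + 3 * x) :=
      rel_shift3k _ n x
    have h2 : Rel s r (((0:ZMod s),(0:ZMod r)), n + 1) (((0:ZMod s),(0:ZMod r)), n + 3 * x) := by
      refine rel_cast rfl ?_ (rel_shiftS _ (n+1) q)
      have hz : (3:ℤ) * x = s * q + 1 := by exact_mod_cast hxq
      exact Prod.ext rfl (by push_cast; omega)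
    exact h1.trans h2.symm
  · obtain ⟨x, q, hxq⟩ := exists_bezout r hr h
    have h1 : Rel s r (((0:ZMod s),(0:ZMod r)), n) (((0:ZMod s),(0:ZMod r)), n + 3 * x) :=
      rel_shift3k _ n x
    have h2 : Rel s r (((0:ZMod s),(0:ZMod r)), n + 1) (((0:ZMod s),(0:ZMod r)), n + 3 * x) := by
      refine rel_cast rfl ?_ (rel_shiftR _ (n+1) q)
      have hz : (3:ℤ) * x = r * q + 1 := by exact_mod_cast hxq
      exact Prod.ext rfl (by push_cast; omega)
    exact h1.trans h2.symm


lemma rel_upk (hsr : ¬ (3 ∣ s) ∨ ¬ (3 ∣ r)) (hs : 4 ≤ s) (hr : 4 ≤ r) (n : ℤ) (k : ℕ) :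
    Rel s r (((0 : ZMod s), (0 : ZMod r)), n) (((0 : ZMod s), (0 : ZMod r)), n + k) := by
  induction k with
  | zero => exact rel_cast rfl (by simp) (Rel.refl _)
  | succ k ih =>
      exact ih.trans (rel_cast rfl (by push_cast; ring_nf) (rel_up hsr hs hr (n + k)))

lemma rel_base_any (hsr : ¬ (3 ∣ s) ∨ ¬ (3 ∣ r)) (hs : 4 ≤ s) (hr : 4 ≤ r) (n m : ℤ) :
    Rel s r (((0 : ZMod s), (0 : ZMod r)), n) (((0 : ZMod s), (0 : ZMod r)), m) := by
  rcases le_total n m with h | h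
  · refine rel_cast rfl ?_ (rel_upk hsr hs hr n (m - n).toNat)
    exact Prod.ext rfl (by omega)
  · refine Rel.symm ?_
    refine rel_cast rfl ?_ (rel_upk hsr hs hr m (n - m).toNat)
    exact Prod.ext rfl (by omega)

lemma rel_all (hsr : ¬ (3 ∣ s) ∨ ¬ (3 ∣ r)) (hs : 4 ≤ s) (hr : 4 ≤ r)
    (v w : (ZMod s × ZMod r) × ℤ) : Rel s r v w := by
  have : NeZero s := ⟨by omega⟩
  have : NeZero r := ⟨by omega⟩
  obtain ⟨⟨a, b⟩, n⟩ := v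
  obtain ⟨⟨c, d⟩, m⟩ := w
  exact ((rel_to_base a b n).trans (rel_base_any hsr hs hr _ _)).trans
    (rel_to_base c d m).symm

section Invariant

variable (h3s : 3 ∣ s) (h3r : 3 ∣ r)

/-- The mod-3 invariant. -/
def gmap (v : (ZMod s × ZMod r) × ℤ) : ZMod 3 :=
  (v.2 : ZMod 3) - ZMod.castHom h3s (ZMod 3) v.1.1 - ZMod.castHom h3r (ZMod 3) v.1.2

lemma gmap_hom {a b : (ZMod s × ZMod r) × ℤ} (e : a ⟶ b) :
    gmap h3s h3r a = gmap h3s h3r b := by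
  obtain ⟨ma, ⟨hn⟩⟩ := e
  obtain ⟨p, n⟩ := a
  obtain ⟨q, m⟩ := b
  dsimp only at ma hn
  subst hn
  change McKayArrow s r p q at ma
  cases ma with
  | a =>
      simp only [gmap, Prod.fst_add, Prod.snd_add, map_add, map_one, map_zero,
        Int.cast_add, Int.cast_one]
      ring
  | b =>
      simp only [gmap, Prod.fst_add, Prod.snd_add, map_add, map_one, map_zero,
        Int.cast_add, Int.cast_one]
      ring
  | c =>
      have h3 : (3 : ZMod 3) = 0 := by decide
      simp only [gmap, Prod.fst_sub, Prod.snd_sub, map_sub, map_one,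
        Int.cast_add, Int.cast_one]
      linear_combination -h3

lemma gmap_path {a b : Quiver.Symmetrify ((ZMod s × ZMod r) × ℤ)}
    (p : Quiver.Path a b) : gmap h3s h3r a = gmap h3s h3r b := by
  induction p with
  | nil => rfl
  | cons p e ih =>
      rcases e with e | e
      · exact ih.trans (gmap_hom h3s h3r e)
      · exact ih.trans (gmap_hom h3s h3r e).symm

lemma gmap_rel {a b : (ZMod s × ZMod r) × ℤ} (h : Rel s r a b) :
    gmap h3s h3r a = gmap h3s h3r b := by
  obtain ⟨p⟩ := h
  exact gmap_path h3s h3r p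

end Invariant

end SepMcKay

/-- For integers `s, r ≥ 4`, the separated quiver `ℤ_v Q̃(s, r)` of the McKay quiver of
`ℤ/sℤ × ℤ/rℤ ⊆ SL(3, ℂ)` has exactly `3` weakly connected components when `3 ∣ s` and
`3 ∣ r`, and is weakly connected (exactly `1` component) otherwise. -/
theorem sep_mckay_abelian_components (s r : ℕ) (hs : 4 ≤ s) (hr : 4 ≤ r) :
    Nat.card (Quiver.WeaklyConnectedComponent ((ZMod s × ZMod r) × ℤ)) =
      if 3 ∣ s ∧ 3 ∣ r then 3 else 1 := by
  have hns : NeZero s := ⟨by omega⟩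
  have hnr : NeZero r := ⟨by omega⟩
  by_cases hcase : 3 ∣ s ∧ 3 ∣ r
  · obtain ⟨h3s, h3r⟩ := hcase
    rw [if_pos ⟨h3s, h3r⟩]
    have hbase : ∀ m : ℤ,
        SepMcKay.gmap h3s h3r (((0 : ZMod s), (0 : ZMod r)), m) = (m : ZMod 3) := by
      intro m; simp [SepMcKay.gmap]
    let F : Quiver.WeaklyConnectedComponent ((ZMod s × ZMod r) × ℤ) → ZMod 3 :=
      Quotient.lift (SepMcKay.gmap h3s h3r) (fun a b h => SepMcKay.gmap_rel h3s h3r h)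
    have hbij : Function.Bijective F := by
      constructor
      · intro x y
        refine Quotient.inductionOn₂ x y ?_
        rintro ⟨⟨a, b⟩, n⟩ ⟨⟨c, d⟩, m⟩ h
        have hgeq : SepMcKay.gmap h3s h3r ((a, b), n) = SepMcKay.gmap h3s h3r ((c, d), m) := h
        set mv : ℤ := n - a.val - b.val with hmv
        set mw : ℤ := m - c.val - d.val with hmw
        have hv := SepMcKay.rel_to_base a b n
        have hw := SepMcKay.rel_to_base c d m
        have h1 : (mv : ZMod 3) = (mw : ZMod 3) := by
          rw [← hbase mv, ← hbase mw, ← SepMcKay.gmap_rel h3s h3r hv,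
            ← SepMcKay.gmap_rel h3s h3r hw, hgeq]
        have h2 : (3 : ℤ) ∣ mw - mv := Int.ModEq.dvd ((ZMod.intCast_eq_intCast_iff _ _ _).mp h1)
        obtain ⟨t, ht⟩ := h2
        have hmid : SepMcKay.Rel s r (((0 : ZMod s), (0 : ZMod r)), mv)
            (((0 : ZMod s), (0 : ZMod r)), mw) := by
          rcases le_or_gt 0 t with hts | hts
          · refine SepMcKay.rel_cast rfl ?_ (SepMcKay.rel_shift3k _ mv t.toNat)
            exact Prod.ext rfl (by omega)
          · refine SepMcKay.Rel.symm ?_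
            refine SepMcKay.rel_cast rfl ?_ (SepMcKay.rel_shift3k _ mw (-t).toNat)
            exact Prod.ext rfl (by omega)
        exact Quotient.sound ((hv.trans hmid).trans hw.symm)
      · intro z
        refine ⟨Quotient.mk _ (((0 : ZMod s), (0 : ZMod r)), ((z.val : ℤ))), ?_⟩
        show SepMcKay.gmap h3s h3r _ = z
        rw [hbase]
        push_cast
        simp [ZMod.natCast_val, ZMod.cast_id]
    rw [Nat.card_eq_of_bijective F hbij, Nat.card_zmod]
  · rw [if_neg hcase]
    rw [Nat.card_eq_one_iff_exists]
    have hsr : ¬ (3 ∣ s) ∨ ¬ (3 ∣ r) := by tauto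
    refine ⟨Quotient.mk _ (((0 : ZMod s), (0 : ZMod r)), (0 : ℤ)), ?_⟩
    intro y
    refine Quotient.inductionOn y ?_
    intro v
    exact Quotient.sound (SepMcKay.rel_all hsr hs hr v _)
end

section
/- Let m ≥ 1 and n ≥ 1 be integers and let A₁, …, A_{n+1} be complex m×m matrices with |det A_{n+1}| = 1 (for instance, A_{n+1} a permutation matrix). Let L be the (n+1)m × (n+1)m block matrix whose (s, 1) block is A_s for s = 1, …, n+1, whose (s, s+1) block is −E (the negative of the m×m identity matrix) for s = 1, …, n, and all of whose other blocks are zero. Then L has an eigenvalue λ ∈ ℂ with |λ| ≥ 1; that is, the spectral radius of L is at least 1. -/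
/-!
Rotating the block columns of `L` cyclically makes it block upper triangular with diagonal
blocks `-E, …, -E, A_{n+1}`; the sign of the rotation cancels the sign `(-1)^{nm}` of the `-E`
blocks, so `det L = det A_{n+1}`. As `det L` is the product of the `(n+1)m ≥ 1` eigenvalues of
`L`, counted with multiplicity, one of them has modulus at least `|det L| ^ (1/((n+1)m)) = 1`.
-/

open Polynomial

namespace Matrix

section Spectrum

variable {𝕜 ι : Type*} [NormedField 𝕜] [IsAlgClosed 𝕜] [Fintype ι] [DecidableEq ι]

theorem exists_mem_spectrum_norm_det_le_pow_card [Nonempty ι] (M : Matrix ι ι 𝕜) :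
    ∃ μ ∈ spectrum 𝕜 M, ‖M.det‖ ≤ ‖μ‖ ^ Fintype.card ι := by
  classical
  have hcard : M.charpoly.roots.card = Fintype.card ι := by
    rw [IsAlgClosed.card_roots_eq_natDegree, charpoly_natDegree_eq_dim]
  have hne : M.charpoly.roots.toFinset.Nonempty := by
    rw [Multiset.toFinset_nonempty, ← Multiset.card_pos, hcard]
    exact Fintype.card_pos
  obtain ⟨μ, hμ, hmax⟩ := M.charpoly.roots.toFinset.exists_max_image (‖·‖) hne
  rw [Multiset.mem_toFinset] at hμ
  refine ⟨μ, mem_spectrum_of_isRoot_charpoly (isRoot_of_mem_roots hμ), ?_⟩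
  rw [det_eq_prod_roots_charpoly, ← hcard, ← normHom_apply, map_multiset_prod]
  exact Multiset.prod_map_le_pow_card (fun x _ => norm_nonneg x)
    fun x hx => hmax x (Multiset.mem_toFinset.mpr hx)

theorem exists_mem_spectrum_one_le_norm_of_one_le_norm_det [Nonempty ι] (M : Matrix ι ι 𝕜)
    (h : 1 ≤ ‖M.det‖) : ∃ μ ∈ spectrum 𝕜 M, 1 ≤ ‖μ‖ := by
  obtain ⟨μ, hμ, hle⟩ := M.exists_mem_spectrum_norm_det_le_pow_card
  exact ⟨μ, hμ, (one_le_pow_iff_of_nonneg (norm_nonneg μ) Fintype.card_ne_zero).mp (h.trans hle)⟩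

end Spectrum

variable {R ι : Type*} [CommRing R] [DecidableEq ι]

theorem det_toSquareBlock_fst {α : Type*} [Fintype α] [DecidableEq α] [Fintype ι]
    (M : Matrix (α × ι) (α × ι) R) (a : α) :
    (M.toSquareBlock Prod.fst a).det = (of fun i j => M (a, i) (a, j)).det := by
  let e : {p : α × ι // p.1 = a} ≃ ι :=
    { toFun := fun p => p.1.2
      invFun := fun i => ⟨(a, i), rfl⟩
      left_inv := by rintro ⟨⟨_, i⟩, rfl⟩; rfl
      right_inv := fun _ => rfl }
  rw [← det_submatrix_equiv_self e]
  congr 1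
  ext ⟨⟨b, i⟩, hb⟩ ⟨⟨c, j⟩, hc⟩
  dsimp only at hb hc
  subst hb hc
  rfl

def loewyMatrix {n : ℕ} (A : Fin (n + 1) → Matrix ι ι R) :
    Matrix (Fin (n + 1) × ι) (Fin (n + 1) × ι) R :=
  of fun p q =>
    if q.1 = 0 then A p.1 p.2 q.2
    else if (q.1 : ℕ) = (p.1 : ℕ) + 1 then (if p.2 = q.2 then -1 else 0)
    else 0

theorem loewyMatrix_submatrix_finRotate {n : ℕ} (A : Fin (n + 1) → Matrix ι ι R) :
    (loewyMatrix A).submatrix id (Equiv.prodCongrLeft fun _ => finRotate (n + 1)) =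
      of fun p q =>
        if q.1 = Fin.last n then A p.1 p.2 q.2
        else if q.1 = p.1 then (if p.2 = q.2 then -1 else 0)
        else 0 := by
  ext p ⟨a, j⟩
  simp only [loewyMatrix, submatrix_apply, id, Equiv.prodCongrLeft_apply, of_apply]
  by_cases ha : a = Fin.last n
  · simp [ha]
  · have hval := coe_finRotate_of_ne_last ha
    have hne : finRotate (n + 1) a ≠ 0 := by
      intro h
      rw [h, Fin.val_zero] at hval
      omega
    simp only [hne, ha, hval, Nat.add_right_cancel_iff, ← Fin.ext_iff, if_false]

theorem blockTriangular_loewyMatrix_submatrix_finRotate {n : ℕ}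
    (A : Fin (n + 1) → Matrix ι ι R) :
    ((loewyMatrix A).submatrix id
      (Equiv.prodCongrLeft fun _ => finRotate (n + 1))).BlockTriangular Prod.fst := by
  intro p q hlt
  rw [loewyMatrix_submatrix_finRotate, of_apply, if_neg (Fin.ne_last_of_lt hlt), if_neg hlt.ne]

theorem det_loewyMatrix_submatrix_finRotate [Fintype ι] {n : ℕ} (A : Fin (n + 1) → Matrix ι ι R) :
    ((loewyMatrix A).submatrix id (Equiv.prodCongrLeft fun _ => finRotate (n + 1))).det =
      ((-1) ^ Fintype.card ι) ^ n * (A (Fin.last n)).det := by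
  have hblock (k : Fin (n + 1)) :
      (of fun i j => (loewyMatrix A).submatrix id
        (Equiv.prodCongrLeft fun _ => finRotate (n + 1)) (k, i) (k, j)) =
        if k = Fin.last n then A k else -1 := by
    rw [loewyMatrix_submatrix_finRotate]
    split_ifs with hk <;> ext i j
    · simp [hk]
    · by_cases hij : i = j <;> simp [hk, hij]
  rw [(blockTriangular_loewyMatrix_submatrix_finRotate A).det_fintype, Fin.prod_univ_castSucc]
  simp only [det_toSquareBlock_fst, hblock, Fin.castSucc_ne_last, if_false, if_true, det_neg,
    det_one, mul_one, Finset.prod_const, Finset.card_univ, Fintype.card_fin]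

theorem det_loewyMatrix [Fintype ι] {n : ℕ} (A : Fin (n + 1) → Matrix ι ι R) :
    (loewyMatrix A).det = (A (Fin.last n)).det := by
  have hrot := det_permute' (Equiv.prodCongrLeft fun _ : ι => finRotate (n + 1)) (loewyMatrix A)
  rw [det_loewyMatrix_submatrix_finRotate] at hrot
  have hsign : ((Equiv.Perm.sign (Equiv.prodCongrLeft fun _ : ι => finRotate (n + 1)) : ℤ) : R) =
      ((-1) ^ Fintype.card ι) ^ n := by
    simp [Equiv.Perm.sign_prodCongrLeft, sign_finRotate, ← pow_mul, mul_comm n]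
  have hsq : (((-1 : R) ^ Fintype.card ι) ^ n) * ((-1) ^ Fintype.card ι) ^ n = 1 := by
    rw [← mul_pow, ← mul_pow, neg_one_mul, neg_neg, one_pow, one_pow]
  rw [hsign] at hrot
  calc (loewyMatrix A).det
      = ((-1) ^ Fintype.card ι) ^ n * (((-1) ^ Fintype.card ι) ^ n * (loewyMatrix A).det) := by
        rw [← mul_assoc, hsq, one_mul]
    _ = (A (Fin.last n)).det := by rw [← hrot, ← mul_assoc, hsq, one_mul]

end Matrix

theorem loewy_matrix_spectral_radius_ge_one_general
    (m n : ℕ) (hm : 1 ≤ m)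
    (A : Fin (n + 1) → Matrix (Fin m) (Fin m) ℂ)
    (hA : ‖(A (Fin.last n)).det‖ = 1)
    (L : Matrix (Fin (n + 1) × Fin m) (Fin (n + 1) × Fin m) ℂ)
    (hL : ∀ p q, L p q =
      if q.1 = 0 then A p.1 p.2 q.2
      else if (q.1 : ℕ) = (p.1 : ℕ) + 1 then (if p.2 = q.2 then -1 else 0)
      else 0) :
    ∃ μ : ℂ, μ ∈ spectrum ℂ L ∧ 1 ≤ ‖μ‖ := by
  have hL_eq : L = Matrix.loewyMatrix A := Matrix.ext hL
  have : Nonempty (Fin (n + 1) × Fin m) := ⟨(0, ⟨0, hm⟩)⟩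
  apply L.exists_mem_spectrum_one_le_norm_of_one_le_norm_det
  rw [hL_eq, Matrix.det_loewyMatrix, hA]

/-- Let `A₁, …, A_{n+1}` be complex `m × m` matrices with `|det A_{n+1}| = 1` (e.g. a
permutation matrix), and let `L` be the `(n+1)m × (n+1)m` block matrix whose `(s, 1)`
block is `A_s` for `s = 1, …, n+1`, whose `(s, s+1)` block is `-E` (minus the `m × m`
identity) for `s = 1, …, n`, and all of whose other blocks are zero. Then `L` has an
eigenvalue `λ` with `|λ| ≥ 1`: the spectral radius of `L` is at least `1`. -/
theorem loewy_matrix_spectral_radius_ge_one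
    (m n : ℕ) (hm : 1 ≤ m) (hn : 1 ≤ n)
    (A : Fin (n + 1) → Matrix (Fin m) (Fin m) ℂ)
    (hA : ‖(A (Fin.last n)).det‖ = 1)
    (L : Matrix (Fin (n + 1) × Fin m) (Fin (n + 1) × Fin m) ℂ)
    (hL : ∀ p q, L p q =
      if q.1 = 0 then A p.1 p.2 q.2
      else if (q.1 : ℕ) = (p.1 : ℕ) + 1 then (if p.2 = q.2 then -1 else 0)
      else 0) :
    ∃ μ : ℂ, μ ∈ spectrum ℂ L ∧ 1 ≤ ‖μ‖ :=
  loewy_matrix_spectral_radius_ge_one_general m n hm A hA L hL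
end
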